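/- arXiv:1506.01459 — 7 statements merged into one kernel-verified Lean document; each statement's English description precedes it below -/
import Mathlib

section
/- Let G₁ and G₂ be groups forming an amalgam (i.e., the set-theoretic intersection G₁ ∩ G₂ is a subgroup of both, with compatible multiplications). Set L = G₁ ∪ G₂ and D = W(G₁) ∪ W(G₂), with Π sending a word in W(G_i) to its product in G_i, and inversion given by the group inversions. Then L with these structures is a partial group. -/
universe u v w

/-- A partial group in the sense of Chermak: a set `L` with a set `D` of words,
a (total, but only meaningful on `D`) product `prod`, and an involutory inversion. -/
structure PartialGroup (L : Type u) where
  D : Set (List L)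
  prod : List L → L
  inv : L → L
  nil_mem : ([] : List L) ∈ D
  single_mem : ∀ f : L, [f] ∈ D
  append_closed : ∀ u v : List L, u ++ v ∈ D → u ∈ D ∧ v ∈ D
  prod_single : ∀ f : L, prod [f] = f
  prod_assoc : ∀ u v w : List L, u ++ v ++ w ∈ D →
    (u ++ [prod v] ++ w ∈ D ∧ prod (u ++ v ++ w) = prod (u ++ [prod v] ++ w))
  inv_inv : ∀ f : L, inv (inv f) = f
  inv_word_mem : ∀ u ∈ D, (u.reverse.map inv) ++ u ∈ D
  prod_inv_word : ∀ u ∈ D, prod ((u.reverse.map inv) ++ u) = prod []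

namespace PartialGroup

variable {L : Type u} (PG : PartialGroup L)

/-- The identity element `1 = Π(∅)`. -/
def one : L := PG.prod []

/-- Conjugation `x^g = Π(g⁻¹, x, g)` (only meaningful when `(g⁻¹,x,g) ∈ D`). -/
def conj (g x : L) : L := PG.prod [PG.inv g, x, g]

/-- `D(g)`: the set of `x` for which conjugation by `g` is defined. -/
def Dset (g : L) : Set L := {x | [PG.inv g, x, g] ∈ PG.D}

/-- `P^g`, the image of a subset under conjugation by `g`. -/
def conjSet (g : L) (P : Set L) : Set L := PG.conj g '' P

/-- A partial subgroup: nonempty, closed under inversion and under defined products. -/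
def IsPartialSubgroup (H : Set L) : Prop :=
  H.Nonempty ∧ (∀ h ∈ H, PG.inv h ∈ H) ∧
    ∀ v ∈ PG.D, (∀ x ∈ v, x ∈ H) → PG.prod v ∈ H

/-- A partial normal subgroup: a partial subgroup closed under defined conjugation. -/
def IsPartialNormal (N : Set L) : Prop :=
  PG.IsPartialSubgroup N ∧ ∀ x ∈ N, ∀ f : L, x ∈ PG.Dset f → PG.conj f x ∈ N

/-- A subgroup of a partial group: a partial subgroup all of whose words lie in `D`. -/
def IsSubgroup (H : Set L) : Prop :=
  PG.IsPartialSubgroup H ∧ ∀ w : List L, (∀ x ∈ w, x ∈ H) → w ∈ PG.D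

/-- A `p`-subgroup: a subgroup of `p`-power order. -/
def IsPSubgroup (p : ℕ) (H : Set L) : Prop :=
  PG.IsSubgroup H ∧ ∃ k : ℕ, Nat.card H = p ^ k

/-- The product `MN = {Π(m,n) : m ∈ M, n ∈ N, (m,n) ∈ D}` of two subsets. -/
def setProd (M N : Set L) : Set L :=
  {z | ∃ m ∈ M, ∃ n ∈ N, [m, n] ∈ PG.D ∧ z = PG.prod [m, n]}

/-- The product `N₁N₂⋯N_l` of a family of subsets. -/
def multiProd {l : ℕ} (N : Fin l → Set L) : Set L :=
  {z | ∃ n : Fin l → L, List.ofFn n ∈ PG.D ∧ (∀ i, n i ∈ N i) ∧ z = PG.prod (List.ofFn n)}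

/-- A word is in `D` via a chain of groups from `Δ`. -/
def InDVia (Δ : Set (Set L)) (wrd : List L) : Prop :=
  ∃ P : Fin (wrd.length + 1) → Set L, (∀ i, P i ∈ Δ) ∧
    ∀ i : Fin wrd.length,
      P i.castSucc ⊆ PG.Dset (wrd.get i) ∧ PG.conjSet (wrd.get i) (P i.castSucc) = P i.succ

/-- `S_g = {s ∈ S : (g⁻¹,s,g) ∈ D and s^g ∈ S}`. -/
def Sg (S : Set L) (g : L) : Set L :=
  {s ∈ S | s ∈ PG.Dset g ∧ PG.conj g s ∈ S}

/-- `S_w` for a word `w = (g₁,…,gₙ)`: those `s ∈ S` admitting a chain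
`s = x₀, x₁, …, xₙ ∈ S` with `x_{i-1}^{g_i} = x_i`. -/
def Sw (S : Set L) (wrd : List L) : Set L :=
  {s ∈ S | ∃ x : Fin (wrd.length + 1) → L, (∀ i, x i ∈ S) ∧ x 0 = s ∧
    ∀ i : Fin wrd.length,
      x i.castSucc ∈ PG.Dset (wrd.get i) ∧ PG.conj (wrd.get i) (x i.castSucc) = x i.succ}

/-- The (right) coset `Kf = {kf : k ∈ K, (k,f) ∈ D}`. -/
def coset (K : Set L) (f : L) : Set L :=
  {z | ∃ k ∈ K, [k, f] ∈ PG.D ∧ z = PG.prod [k, f]}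

/-- A maximal coset of `K`: a coset maximal under inclusion among cosets of `K`. -/
def IsMaxCoset (K C : Set L) : Prop :=
  (∃ f, C = PG.coset K f) ∧ ∀ g : L, C ⊆ PG.coset K g → C = PG.coset K g

/-- `f` and `g` lie in a common maximal coset of `K`, i.e. `f̄ = ḡ` in `L/K`. -/
def SameMaxCoset (K : Set L) (f g : L) : Prop :=
  ∃ C, PG.IsMaxCoset K C ∧ f ∈ C ∧ g ∈ C

/-- `N_K(P,Q) = {x ∈ K : P ⊆ D(x), P^x ≤ Q}`. -/
def NBetween (K P Q : Set L) : Set L :=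
  {x ∈ K | P ⊆ PG.Dset x ∧ PG.conjSet x P ⊆ Q}

/-- The normalizer `N_A(R) = {a ∈ A : R ⊆ D(a), R^a = R}`. -/
def NIn (A R : Set L) : Set L :=
  {a ∈ A | R ⊆ PG.Dset a ∧ PG.conjSet a R = R}

end PartialGroup

/-- A locality `(L, Δ, S)` in the sense of Chermak. -/
structure Locality (L : Type u) extends PartialGroup L where
  finite : Finite L
  p : ℕ
  p_prime : p.Prime
  S : Set L
  Δ : Set (Set L)
  Δ_nonempty : Δ.Nonempty
  Δ_subgroups : ∀ P ∈ Δ, P ⊆ S ∧ toPartialGroup.IsSubgroup P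
  L1 : toPartialGroup.IsPSubgroup p S ∧
    ∀ T : Set L, toPartialGroup.IsPSubgroup p T → S ⊆ T → S = T
  L2 : ∀ wrd : List L, wrd ∈ toPartialGroup.D ↔ toPartialGroup.InDVia Δ wrd
  L3 : ∀ Q : Set L, Q ⊆ S → toPartialGroup.IsSubgroup Q →
    (∃ P ∈ Δ, ∃ g : L, P ⊆ toPartialGroup.Dset g ∧ toPartialGroup.conjSet g P ⊆ Q) → Q ∈ Δ

namespace Locality

variable {L : Type u} (Loc : Locality L)

/-- `S_g` for the locality. -/
def Sg (g : L) : Set L := Loc.toPartialGroup.Sg Loc.S g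

/-- `S_w` for the locality. -/
def Sw (wrd : List L) : Set L := Loc.toPartialGroup.Sw Loc.S wrd

/-- The domain `L∘Δ` of the relation `↑_K`: pairs `(f,P)` with `P ∈ Δ` and `P ≤ S_f`. -/
def LDelta : Set (L × Set L) := {fP | fP.2 ∈ Loc.Δ ∧ fP.2 ⊆ Loc.Sg fP.1}

/-- Chermak's relation `↑_K` on `L∘Δ`: `(f,P) ↑_K (g,Q)` iff there are
`x ∈ N_K(P,Q)` and `y ∈ N_K(P^f,Q^g)` with `xg = fy`. -/
def UpRel (K : Set L) (fP gQ : L × Set L) : Prop :=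
  ∃ x ∈ Loc.toPartialGroup.NBetween K fP.2 gQ.2,
    ∃ y ∈ Loc.toPartialGroup.NBetween K
        (Loc.toPartialGroup.conjSet fP.1 fP.2) (Loc.toPartialGroup.conjSet gQ.1 gQ.2),
      [x, gQ.1] ∈ Loc.toPartialGroup.D ∧ [fP.1, y] ∈ Loc.toPartialGroup.D ∧
        Loc.toPartialGroup.prod [x, gQ.1] = Loc.toPartialGroup.prod [fP.1, y]

/-- `f` is `↑_K`-maximal. -/
def UpMaximal (K : Set L) (f : L) : Prop :=
  ∀ gQ ∈ Loc.LDelta, Loc.UpRel K (f, Loc.Sg f) gQ → Loc.UpRel K gQ (f, Loc.Sg f)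

end Locality

/-- `ρ : L → L'` realizes `Loc'` as the quotient locality `L/K`:
it is a surjective homomorphism of partial groups with kernel `K`, whose fibers
are the maximal cosets of `K`, and with `D̄ = Dρ*`, `S̄ = Sρ`, `Δ̄ = {P̄ : P ∈ Δ}`. -/
structure IsQuotientMap {L : Type u} {L' : Type v} (Loc : Locality L) (K : Set L)
    (Loc' : Locality L') (ρ : L → L') : Prop where
  surj : Function.Surjective ρ
  D_eq : Loc'.D = (fun wrd : List L => wrd.map ρ) '' Loc.D
  hom : ∀ wrd ∈ Loc.D, Loc'.toPartialGroup.prod (wrd.map ρ) = ρ (Loc.toPartialGroup.prod wrd)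
  ker : ∀ f : L, ρ f = ρ Loc.toPartialGroup.one ↔ f ∈ K
  fiber : ∀ f g : L, ρ f = ρ g ↔ Loc.toPartialGroup.SameMaxCoset K f g
  S_eq : Loc'.S = ρ '' Loc.S
  Δ_eq : Loc'.Δ = (fun P : Set L => ρ '' P) '' Loc.Δ
  p_eq : Loc'.p = Loc.p

/-- Two groups `G1`, `G2` forming an amalgam inside a set `L`: both inject into `L`,
their ranges cover `L`, and the group structures agree on the intersection
(which is thereby a common subgroup). -/
structure Amalgam (G1 : Type u) (G2 : Type v) (L : Type w) [Group G1] [Group G2] where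
  i1 : G1 → L
  i2 : G2 → L
  inj1 : Function.Injective i1
  inj2 : Function.Injective i2
  cover : Set.range i1 ∪ Set.range i2 = Set.univ
  one_eq : i1 1 = i2 1
  mul_compat : ∀ (a c : G1) (b d : G2), i1 a = i2 b → i1 c = i2 d → i1 (a * c) = i2 (b * d)
  inv_compat : ∀ (a : G1) (b : G2), i1 a = i2 b → i1 a⁻¹ = i2 b⁻¹

/-- The partial group structure `PG` on `L` is the one associated to the amalgam `A`:
`D = W(G1) ∪ W(G2)`, with product and inversion the ones of the respective groups. -/
def Amalgam.Realizes {G1 : Type u} {G2 : Type v} {L : Type w} [Group G1] [Group G2]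
    (A : Amalgam G1 G2 L) (PG : PartialGroup L) : Prop :=
  PG.D = {wrd | (∃ u : List G1, wrd = u.map A.i1) ∨ (∃ u : List G2, wrd = u.map A.i2)} ∧
  (∀ u : List G1, PG.prod (u.map A.i1) = A.i1 u.prod) ∧
  (∀ u : List G2, PG.prod (u.map A.i2) = A.i2 u.prod) ∧
  (∀ a : G1, PG.inv (A.i1 a) = A.i1 a⁻¹) ∧
  (∀ b : G2, PG.inv (A.i2 b) = A.i2 b⁻¹)

section AmalgamAux
open scoped Classical

variable {G1 : Type u} {G2 : Type v} {L : Type w} [Group G1] [Group G2]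
  (A : Amalgam G1 G2 L)

lemma Amalgam.mem_cover (x : L) : (∃ a, A.i1 a = x) ∨ (∃ b, A.i2 b = x) := by
  have : x ∈ Set.range A.i1 ∪ Set.range A.i2 := by rw [A.cover]; trivial
  exact this

lemma Amalgam.agree_prod : ∀ (u : List G1) (v : List G2),
    u.map A.i1 = v.map A.i2 → A.i1 u.prod = A.i2 v.prod := by
  intro u
  induction u with
  | nil =>
    intro v h
    cases v with
    | nil => simpa using A.one_eq
    | cons b bs => simp at h
  | cons a as ih =>
    intro v h
    cases v with
    | nil => simp at h
    | cons b bs =>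
      simp only [List.map_cons, List.cons.injEq] at h
      simp only [List.prod_cons]
      exact A.mul_compat _ _ _ _ h.1 (ih bs h.2)

noncomputable def Amalgam.pprod (wrd : List L) : L :=
  if h : ∃ u : List G1, wrd = u.map A.i1 then A.i1 h.choose.prod
  else if h2 : ∃ u : List G2, wrd = u.map A.i2 then A.i2 h2.choose.prod
  else A.i1 1

lemma Amalgam.pprod_map1 (u : List G1) : A.pprod (u.map A.i1) = A.i1 u.prod := by
  have h : ∃ w : List G1, u.map A.i1 = w.map A.i1 := ⟨u, rfl⟩
  rw [Amalgam.pprod, dif_pos h]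
  have : u = h.choose := List.map_injective_iff.mpr A.inj1 h.choose_spec
  exact congrArg (fun l => A.i1 l.prod) this.symm

lemma Amalgam.pprod_map2 (v : List G2) : A.pprod (v.map A.i2) = A.i2 v.prod := by
  rw [Amalgam.pprod]
  split_ifs with h h2
  · have := h.choose_spec
    exact A.agree_prod _ _ (by rw [← this])
  · have : v = h2.choose := List.map_injective_iff.mpr A.inj2 h2.choose_spec
    exact congrArg (fun l => A.i2 l.prod) this.symm
  · exact absurd ⟨v, rfl⟩ h2

noncomputable def Amalgam.pinv (x : L) : L :=
  if h : ∃ a, A.i1 a = x then A.i1 h.choose⁻¹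
  else A.i2 (((A.mem_cover x).resolve_left h).choose)⁻¹

lemma Amalgam.pinv_1 (a : G1) : A.pinv (A.i1 a) = A.i1 a⁻¹ := by
  have h : ∃ c, A.i1 c = A.i1 a := ⟨a, rfl⟩
  rw [Amalgam.pinv, dif_pos h]
  congr 1
  rw [A.inj1 h.choose_spec]

lemma Amalgam.pinv_2 (b : G2) : A.pinv (A.i2 b) = A.i2 b⁻¹ := by
  rw [Amalgam.pinv]
  split_ifs with h
  · have hb : A.i1 h.choose = A.i2 b := h.choose_spec
    exact A.inv_compat _ _ hb
  · congr 1
    have hb := ((A.mem_cover (A.i2 b)).resolve_left h).choose_spec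
    rw [A.inj2 hb]

lemma Amalgam.pinv_map1 (u : List G1) :
    (u.map A.i1).map A.pinv = (u.map fun a => a⁻¹).map A.i1 := by
  simp only [List.map_map]
  exact List.map_congr_left fun a _ => A.pinv_1 a

lemma Amalgam.pinv_map2 (u : List G2) :
    (u.map A.i2).map A.pinv = (u.map fun a => a⁻¹).map A.i2 := by
  simp only [List.map_map]
  exact List.map_congr_left fun a _ => A.pinv_2 a

end AmalgamAux

/-- if `G1` and `G2` form an amalgam, then `L = G1 ∪ G2` with
`D = W(G1) ∪ W(G2)`, the products of the two groups, and their inversions,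
is a partial group. -/
theorem amalgam_gives_partialGroup {G1 : Type u} {G2 : Type v} {L : Type w}
    [Group G1] [Group G2] (A : Amalgam G1 G2 L) :
    ∃ PG : PartialGroup L, A.Realizes PG := by
    classical
  set Dset : Set (List L) :=
    {wrd | (∃ u : List G1, wrd = u.map A.i1) ∨ (∃ u : List G2, wrd = u.map A.i2)} with hD
  refine ⟨⟨Dset, A.pprod, A.pinv, ?_, ?_, ?_, ?_, ?_, ?_, ?_, ?_⟩,
    rfl, A.pprod_map1, A.pprod_map2, A.pinv_1, A.pinv_2⟩
  · exact Or.inl ⟨[], rfl⟩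
  · intro f
    rcases A.mem_cover f with ⟨a, rfl⟩ | ⟨b, rfl⟩
    · exact Or.inl ⟨[a], rfl⟩
    · exact Or.inr ⟨[b], rfl⟩
  · intro u v huv
    rcases huv with ⟨z, hz⟩ | ⟨z, hz⟩
    · obtain ⟨z1, z2, _, h1, h2⟩ := List.map_eq_append_iff.mp hz.symm
      exact ⟨Or.inl ⟨z1, h1.symm⟩, Or.inl ⟨z2, h2.symm⟩⟩
    · obtain ⟨z1, z2, _, h1, h2⟩ := List.map_eq_append_iff.mp hz.symm
      exact ⟨Or.inr ⟨z1, h1.symm⟩, Or.inr ⟨z2, h2.symm⟩⟩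
  · intro f
    rcases A.mem_cover f with ⟨a, rfl⟩ | ⟨b, rfl⟩
    · simpa using A.pprod_map1 [a]
    · simpa using A.pprod_map2 [b]
  · intro u v w huvw
    rcases huvw with ⟨z, hz⟩ | ⟨z, hz⟩
    · obtain ⟨z12, z3, hzs, h12, h3⟩ := List.map_eq_append_iff.mp hz.symm
      obtain ⟨z1, z2, hzs2, h1, h2⟩ := List.map_eq_append_iff.mp h12
      subst hzs hzs2
      constructor
      · refine Or.inl ⟨z1 ++ [z2.prod] ++ z3, ?_⟩
        simp [← h1, ← h2, ← h3, A.pprod_map1 z2]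
      · rw [← h1, ← h2, ← h3, A.pprod_map1 z2,
          ← List.map_append, ← List.map_append]
        have : z1.map A.i1 ++ [A.i1 z2.prod] ++ z3.map A.i1
            = (z1 ++ [z2.prod] ++ z3).map A.i1 := by simp
        rw [this, A.pprod_map1, A.pprod_map1]
        simp
    · obtain ⟨z12, z3, hzs, h12, h3⟩ := List.map_eq_append_iff.mp hz.symm
      obtain ⟨z1, z2, hzs2, h1, h2⟩ := List.map_eq_append_iff.mp h12
      subst hzs hzs2
      constructor
      · refine Or.inr ⟨z1 ++ [z2.prod] ++ z3, ?_⟩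
        simp [← h1, ← h2, ← h3, A.pprod_map2 z2]
      · rw [← h1, ← h2, ← h3, A.pprod_map2 z2,
          ← List.map_append, ← List.map_append]
        have : z1.map A.i2 ++ [A.i2 z2.prod] ++ z3.map A.i2
            = (z1 ++ [z2.prod] ++ z3).map A.i2 := by simp
        rw [this, A.pprod_map2, A.pprod_map2]
        simp
  · intro f
    rcases A.mem_cover f with ⟨a, rfl⟩ | ⟨b, rfl⟩
    · rw [A.pinv_1, A.pinv_1, inv_inv]
    · rw [A.pinv_2, A.pinv_2, inv_inv]
  · intro u hu
    rcases hu with ⟨z, rfl⟩ | ⟨z, rfl⟩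
    · refine Or.inl ⟨(z.map fun a => a⁻¹).reverse ++ z, ?_⟩
      rw [← List.map_reverse, A.pinv_map1, List.map_append, List.map_reverse,
        List.map_reverse]
    · refine Or.inr ⟨(z.map fun a => a⁻¹).reverse ++ z, ?_⟩
      rw [← List.map_reverse, A.pinv_map2, List.map_append, List.map_reverse,
        List.map_reverse]
  · intro u hu
    rcases hu with ⟨z, rfl⟩ | ⟨z, rfl⟩
    · rw [← List.map_reverse, A.pinv_map1, ← List.map_append, A.pprod_map1]
      have h0 : A.pprod [] = A.i1 ([] : List G1).prod := A.pprod_map1 []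
      rw [h0]
      congr 1
      rw [List.prod_append, List.map_reverse, ← List.prod_inv_reverse]
      simp
    · rw [← List.map_reverse, A.pinv_map2, ← List.map_append, A.pprod_map2]
      have h0 : A.pprod [] = A.i2 ([] : List G2).prod := A.pprod_map2 []
      rw [h0]
      congr 1
      rw [List.prod_append, List.map_reverse, ← List.prod_inv_reverse]
      simp
end

section
/- There exists a partial group L and partial normal subgroups M, N of L such that the product MN = {Π(m,n) : m ∈ M, n ∈ N, (m,n) ∈ D} is not a partial normal subgroup of L. Concretely: let G₁ ≅ C₂ × C₄ and let G₂ be dihedral of order 16, forming an amalgam with G₁ ∩ G₂ ≅ C₂ × C₂ and Φ(G₁) = Z(G₂); let L = G₁ ∪ G₂ with D = W(G₁) ∪ W(G₂), and let M, N be the two cyclic subgroups of G₁ of order 4. Then M and N are partial normal subgroups of L but MN = G₁ is not a partial normal subgroup of L. -/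
universe u v w

/-!
Glue `G₁ = C₂ × C₄` to `G₂ = D₁₆` along `Ω₁(G₁) = ⟨(1,0), (0,2)⟩ ≅ ⟨s, r⁴⟩`, sending
`Φ(G₁) = ⟨(0,2)⟩` to `Z(G₂) = ⟨r⁴⟩`. A word lies in `D` only if all its letters lie in one `Gᵢ`,
so `x ↦ x^f` for `x ∈ G₁` is either conjugation inside `G₁` or, when `x ∈ G₁ ∩ G₂` and
`f ∈ G₂`, conjugation inside `G₂`. A cyclic subgroup of order 4 of `G₁` is normal in `G₁` and
meets `G₂` only in `Φ(G₁) = Z(G₂)`, so it is partial normal. Their product is all of `G₁`, which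
contains `s`; but `s^r ∈ G₂ ∖ G₁`.
-/

namespace Amalgam

variable {G1 : Type u} {G2 : Type v} {L : Type w} [Group G1] [Group G2] (A : Amalgam G1 G2 L)

theorem mem_range_i1_or_mem_range_i2 (z : L) : z ∈ Set.range A.i1 ∨ z ∈ Set.range A.i2 := by
  rw [← Set.mem_union, A.cover]
  trivial

theorem i1_prod_eq_i2_prod {u : List G1} {v : List G2} (h : u.map A.i1 = v.map A.i2) :
    A.i1 u.prod = A.i2 v.prod := by
  induction u generalizing v with
  | nil => cases v <;> simp_all [A.one_eq]
  | cons a u ih =>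
    cases v with
    | nil => simp at h
    | cons b v =>
      simp only [List.map_cons, List.cons.injEq] at h
      simpa only [List.prod_cons] using A.mul_compat a u.prod b v.prod h.1 (ih h.2)

theorem exists_eq_map_i1 {S : Set G1} {w : List L} (hw : ∀ z ∈ w, z ∈ A.i1 '' S) :
    ∃ u : List G1, (∀ a ∈ u, a ∈ S) ∧ w = u.map A.i1 := by
  induction w with
  | nil => exact ⟨[], by simp, rfl⟩
  | cons z w ih =>
    obtain ⟨a, ha, rfl⟩ := hw z List.mem_cons_self
    obtain ⟨u, hu, rfl⟩ := ih fun x hx => hw x (List.mem_cons_of_mem _ hx)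
    exact ⟨a :: u, by simpa using ⟨ha, hu⟩, rfl⟩

/-- `W(G₁) ∪ W(G₂)`. -/
def words : Set (List L) :=
  {w | (∃ u : List G1, w = u.map A.i1) ∨ (∃ u : List G2, w = u.map A.i2)}

open Classical in
noncomputable def wordProd (w : List L) : L :=
  if h : ∃ u : List G1, w = u.map A.i1 then A.i1 h.choose.prod
  else if h' : ∃ u : List G2, w = u.map A.i2 then A.i2 h'.choose.prod else A.i1 1

theorem wordProd_map_i1 (u : List G1) : A.wordProd (u.map A.i1) = A.i1 u.prod := by
  have h : ∃ u' : List G1, u.map A.i1 = u'.map A.i1 := ⟨u, rfl⟩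
  rw [wordProd, dif_pos h, ← A.inj1.list_map h.choose_spec]

theorem wordProd_map_i2 (u : List G2) : A.wordProd (u.map A.i2) = A.i2 u.prod := by
  by_cases h : ∃ u' : List G1, u.map A.i2 = u'.map A.i1
  · rw [wordProd, dif_pos h]
    exact A.i1_prod_eq_i2_prod h.choose_spec.symm
  · have h' : ∃ u' : List G2, u.map A.i2 = u'.map A.i2 := ⟨u, rfl⟩
    rw [wordProd, dif_neg h, dif_pos h', ← A.inj2.list_map h'.choose_spec]

theorem wordProd_nil : A.wordProd [] = A.i1 1 :=
  A.wordProd_map_i1 []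

open Classical in
noncomputable def inv (z : L) : L :=
  if h : ∃ a, A.i1 a = z then A.i1 h.choose⁻¹
  else if h' : ∃ b, A.i2 b = z then A.i2 h'.choose⁻¹ else z

theorem inv_i1 (a : G1) : A.inv (A.i1 a) = A.i1 a⁻¹ := by
  have h : ∃ a', A.i1 a' = A.i1 a := ⟨a, rfl⟩
  rw [inv, dif_pos h, A.inj1 h.choose_spec]

theorem inv_i2 (b : G2) : A.inv (A.i2 b) = A.i2 b⁻¹ := by
  by_cases h : ∃ a, A.i1 a = A.i2 b
  · rw [inv, dif_pos h]
    exact A.inv_compat _ _ h.choose_spec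
  · have h' : ∃ b', A.i2 b' = A.i2 b := ⟨b, rfl⟩
    rw [inv, dif_neg h, dif_pos h', A.inj2 h'.choose_spec]

section MappedWords

variable {G : Type*} [Group G] {i : G → L}

theorem exists_assoc_of_prod_map {P : List L → L} (hP : ∀ u : List G, P (u.map i) = i u.prod)
    {u v w : List L} {x : List G} (h : u ++ v ++ w = x.map i) :
    ∃ y : List G, u ++ [P v] ++ w = y.map i ∧ P (u ++ v ++ w) = P (u ++ [P v] ++ w) := by
  obtain ⟨xuv, xw, rfl, huv, rfl⟩ := List.map_eq_append_iff.mp h.symm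
  obtain ⟨xu, xv, rfl, rfl, rfl⟩ := List.map_eq_append_iff.mp huv
  have hmid : xu.map i ++ [P (xv.map i)] ++ xw.map i = (xu ++ [xv.prod] ++ xw).map i := by
    simp [hP]
  refine ⟨_, hmid, ?_⟩
  rw [hmid, ← List.map_append, ← List.map_append, hP, hP]
  simp [List.prod_append]

theorem inv_word_map {ι : L → L} (hι : ∀ a, ι (i a) = i a⁻¹) (u : List G) :
    (u.map i).reverse.map ι ++ u.map i = ((u.map (·⁻¹)).reverse ++ u).map i := by
  simp [List.map_reverse, hι]

theorem prod_inv_word (u : List G) : ((u.map (·⁻¹)).reverse ++ u).prod = 1 := by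
  rw [List.prod_append, ← List.prod_inv_reverse, inv_mul_cancel]

end MappedWords

noncomputable def toPartialGroup : PartialGroup L where
  D := A.words
  prod := A.wordProd
  inv := A.inv
  nil_mem := Or.inl ⟨[], rfl⟩
  single_mem f := by
    obtain ⟨a, rfl⟩ | ⟨b, rfl⟩ := A.mem_range_i1_or_mem_range_i2 f
    exacts [Or.inl ⟨[a], rfl⟩, Or.inr ⟨[b], rfl⟩]
  append_closed u v := by
    rintro (⟨x, h⟩ | ⟨x, h⟩) <;>
      obtain ⟨xu, xv, rfl, rfl, rfl⟩ := List.map_eq_append_iff.mp h.symm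
    exacts [⟨Or.inl ⟨xu, rfl⟩, Or.inl ⟨xv, rfl⟩⟩, ⟨Or.inr ⟨xu, rfl⟩, Or.inr ⟨xv, rfl⟩⟩]
  prod_single f := by
    obtain ⟨a, rfl⟩ | ⟨b, rfl⟩ := A.mem_range_i1_or_mem_range_i2 f
    · simpa using A.wordProd_map_i1 [a]
    · simpa using A.wordProd_map_i2 [b]
  prod_assoc u v w := by
    rintro (⟨x, h⟩ | ⟨x, h⟩)
    · obtain ⟨y, hy, e⟩ := exists_assoc_of_prod_map A.wordProd_map_i1 h
      exact ⟨Or.inl ⟨y, hy⟩, e⟩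
    · obtain ⟨y, hy, e⟩ := exists_assoc_of_prod_map A.wordProd_map_i2 h
      exact ⟨Or.inr ⟨y, hy⟩, e⟩
  inv_inv f := by
    obtain ⟨a, rfl⟩ | ⟨b, rfl⟩ := A.mem_range_i1_or_mem_range_i2 f
    · rw [A.inv_i1, A.inv_i1, inv_inv]
    · rw [A.inv_i2, A.inv_i2, inv_inv]
  inv_word_mem u := by
    rintro (⟨x, rfl⟩ | ⟨x, rfl⟩)
    exacts [Or.inl ⟨_, inv_word_map A.inv_i1 x⟩, Or.inr ⟨_, inv_word_map A.inv_i2 x⟩]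
  prod_inv_word u := by
    rintro (⟨x, rfl⟩ | ⟨x, rfl⟩)
    · rw [inv_word_map A.inv_i1, A.wordProd_map_i1, prod_inv_word, A.wordProd_nil]
    · rw [inv_word_map A.inv_i2, A.wordProd_map_i2, prod_inv_word, A.wordProd_nil, A.one_eq]

theorem realizes_toPartialGroup : A.Realizes A.toPartialGroup :=
  ⟨rfl, A.wordProd_map_i1, A.wordProd_map_i2, A.inv_i1, A.inv_i2⟩

namespace Realizes

variable {A} {PG : PartialGroup L} (hA : A.Realizes PG)
include hA

theorem prod_map_i1 (u : List G1) : PG.prod (u.map A.i1) = A.i1 u.prod := hA.2.1 u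

theorem prod_map_i2 (u : List G2) : PG.prod (u.map A.i2) = A.i2 u.prod := hA.2.2.1 u

theorem inv_i1 (a : G1) : PG.inv (A.i1 a) = A.i1 a⁻¹ := hA.2.2.2.1 a

theorem inv_i2 (b : G2) : PG.inv (A.i2 b) = A.i2 b⁻¹ := hA.2.2.2.2 b

theorem map_i1_mem (u : List G1) : u.map A.i1 ∈ PG.D := hA.1 ▸ Or.inl ⟨u, rfl⟩

theorem map_i2_mem (u : List G2) : u.map A.i2 ∈ PG.D := hA.1 ▸ Or.inr ⟨u, rfl⟩

theorem conjWord_i1 (a c : G1) :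
    [PG.inv (A.i1 c), A.i1 a, A.i1 c] = [c⁻¹, a, c].map A.i1 := by
  simp [hA.inv_i1]

theorem conjWord_i2 (b c : G2) :
    [PG.inv (A.i2 c), A.i2 b, A.i2 c] = [c⁻¹, b, c].map A.i2 := by
  simp [hA.inv_i2]

theorem i2_mem_Dset (b c : G2) : A.i2 b ∈ PG.Dset (A.i2 c) := by
  show [_, _, _] ∈ PG.D
  rw [hA.conjWord_i2]
  exact hA.map_i2_mem _

theorem conj_i1 (a c : G1) : PG.conj (A.i1 c) (A.i1 a) = A.i1 (c⁻¹ * a * c) := by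
  rw [PartialGroup.conj, hA.conjWord_i1, hA.prod_map_i1]
  simp [mul_assoc]

theorem conj_i2 (b c : G2) : PG.conj (A.i2 c) (A.i2 b) = A.i2 (c⁻¹ * b * c) := by
  rw [PartialGroup.conj, hA.conjWord_i2, hA.prod_map_i2]
  simp [mul_assoc]

theorem exists_of_mem_Dset {x f : L} (h : x ∈ PG.Dset f) :
    (∃ a c, x = A.i1 a ∧ f = A.i1 c) ∨ (∃ b c, x = A.i2 b ∧ f = A.i2 c) := by
  have hx : x ∈ [PG.inv f, x, f] := by simp
  have hf : f ∈ [PG.inv f, x, f] := by simp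
  have hw : [PG.inv f, x, f] ∈ PG.D := h
  rw [hA.1] at hw
  rcases hw with ⟨u, hu⟩ | ⟨u, hu⟩ <;> rw [hu] at hx hf <;>
    obtain ⟨a, -, rfl⟩ := List.mem_map.mp hx <;> obtain ⟨c, -, rfl⟩ := List.mem_map.mp hf
  exacts [Or.inl ⟨a, c, rfl, rfl⟩, Or.inr ⟨a, c, rfl, rfl⟩]

theorem isPartialNormal_image (K : Subgroup G1) [hK : K.Normal]
    (hcenter : ∀ a ∈ K, ∀ b, A.i1 a = A.i2 b → b ∈ Subgroup.center G2) :
    PG.IsPartialNormal (A.i1 '' K) := by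
  refine ⟨⟨⟨_, ⟨1, K.one_mem, rfl⟩⟩, ?_, ?_⟩, ?_⟩
  · rintro _ ⟨a, ha, rfl⟩
    exact ⟨a⁻¹, K.inv_mem ha, (hA.inv_i1 a).symm⟩
  · intro w _ hw
    obtain ⟨u, hu, rfl⟩ := A.exists_eq_map_i1 hw
    exact ⟨u.prod, K.list_prod_mem hu, (hA.prod_map_i1 u).symm⟩
  · rintro _ ⟨a, ha, rfl⟩ f hf
    rcases hA.exists_of_mem_Dset hf with ⟨a', c, hx, rfl⟩ | ⟨b, c, hx, rfl⟩
    · cases A.inj1 hx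
      exact ⟨_, hK.conj_mem' a ha c, (hA.conj_i1 a c).symm⟩
    · have hb := Subgroup.mem_center_iff.mp (hcenter a ha b hx) c
      rw [hx, hA.conj_i2, mul_assoc, ← hb, inv_mul_cancel_left, ← hx]
      exact ⟨a, ha, rfl⟩

theorem not_isPartialNormal_range_i1 {b c : G2} (hb : A.i2 b ∈ Set.range A.i1)
    (hbc : A.i2 (c⁻¹ * b * c) ∉ Set.range A.i1) : ¬ PG.IsPartialNormal (Set.range A.i1) :=
  fun h => hbc (hA.conj_i2 b c ▸ h.2 _ hb _ (hA.i2_mem_Dset b c))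

open scoped Pointwise in
theorem setProd_image_i1 (S T : Set G1) :
    PG.setProd (A.i1 '' S) (A.i1 '' T) = A.i1 '' (S * T) := by
  have hprod (m n : G1) : PG.prod [A.i1 m, A.i1 n] = A.i1 (m * n) := by
    simpa using hA.prod_map_i1 [m, n]
  ext z
  constructor
  · rintro ⟨_, ⟨m, hm, rfl⟩, _, ⟨n, hn, rfl⟩, -, rfl⟩
    exact ⟨m * n, Set.mul_mem_mul hm hn, (hprod m n).symm⟩
  · rintro ⟨_, ⟨m, hm, n, hn, rfl⟩, rfl⟩
    exact ⟨_, ⟨m, hm, rfl⟩, _, ⟨n, hn, rfl⟩, hA.map_i1_mem [m, n], (hprod m n).symm⟩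

end Realizes

section OfSubgroupHom

variable {H : Subgroup G1} (φ : H →* G2)

open Classical in
noncomputable def embedLeft (a : G1) : G2 ⊕ {a : G1 // a ∉ H} :=
  if h : a ∈ H then .inl (φ ⟨a, h⟩) else .inr ⟨a, h⟩

theorem embedLeft_of_mem {a : G1} (h : a ∈ H) : embedLeft φ a = .inl (φ ⟨a, h⟩) :=
  dif_pos h

theorem embedLeft_eq_inl_iff {a : G1} {b : G2} :
    embedLeft φ a = .inl b ↔ ∃ h : a ∈ H, φ ⟨a, h⟩ = b := by
  by_cases h : a ∈ H <;> simp [embedLeft, h]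

theorem inl_mem_range_embedLeft_iff {b : G2} :
    Sum.inl b ∈ Set.range (embedLeft φ) ↔ b ∈ φ.range := by
  constructor
  · rintro ⟨a, ha⟩
    obtain ⟨h, rfl⟩ := (embedLeft_eq_inl_iff φ).mp ha
    exact ⟨_, rfl⟩
  · rintro ⟨x, rfl⟩
    exact ⟨x, embedLeft_of_mem φ x.2⟩

/-- `G₂` together with a copy of `G₁ ∖ H`, so that `H` is glued to `φ H`. -/
noncomputable def ofSubgroupHom (hφ : Function.Injective φ) :
    Amalgam G1 G2 (G2 ⊕ {a : G1 // a ∉ H}) where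
  i1 := embedLeft φ
  i2 := Sum.inl
  inj1 a c h := by
    by_cases ha : a ∈ H <;> by_cases hc : c ∈ H <;> simp [embedLeft, ha, hc] at h
    · exact congrArg Subtype.val (hφ h)
    · exact h
  inj2 := Sum.inl_injective
  cover := Set.eq_univ_of_forall fun
    | .inl b => Or.inr ⟨b, rfl⟩
    | .inr a => Or.inl ⟨a.1, dif_neg a.2⟩
  one_eq := (embedLeft_of_mem φ H.one_mem).trans (congrArg Sum.inl (map_one φ))
  mul_compat a c b d hab hcd := by
    obtain ⟨ha, rfl⟩ := (embedLeft_eq_inl_iff φ).mp hab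
    obtain ⟨hc, rfl⟩ := (embedLeft_eq_inl_iff φ).mp hcd
    rw [embedLeft_of_mem φ (H.mul_mem ha hc), ← map_mul]
    rfl
  inv_compat a b hab := by
    obtain ⟨ha, rfl⟩ := (embedLeft_eq_inl_iff φ).mp hab
    rw [embedLeft_of_mem φ (H.inv_mem ha), ← map_inv]
    rfl

variable {φ} (hφ : Function.Injective φ)

theorem ofSubgroupHom_range_inter :
    Set.range (ofSubgroupHom φ hφ).i1 ∩ Set.range (ofSubgroupHom φ hφ).i2 =
      Sum.inl '' φ.range := by
  ext z
  constructor
  · rintro ⟨h1, b, rfl⟩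
    exact ⟨b, (inl_mem_range_embedLeft_iff φ).mp h1, rfl⟩
  · rintro ⟨b, hb, rfl⟩
    exact ⟨(inl_mem_range_embedLeft_iff φ).mpr hb, b, rfl⟩

theorem card_ofSubgroupHom_range_inter :
    Nat.card (Set.range (ofSubgroupHom φ hφ).i1 ∩ Set.range (ofSubgroupHom φ hφ).i2 : Set _) =
      Nat.card H := by
  rw [ofSubgroupHom_range_inter, Nat.card_image_of_injective Sum.inl_injective]
  exact Nat.card_congr (MonoidHom.ofInjective hφ).toEquiv.symm

end OfSubgroupHom

namespace Realizes

variable {H : Subgroup G1} {φ : H →* G2} {hφ : Function.Injective φ}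
  {PG : PartialGroup (G2 ⊕ {a : G1 // a ∉ H})} (hA : (ofSubgroupHom φ hφ).Realizes PG)
include hA

theorem isPartialNormal_embedLeft_image (K : Subgroup G1) [K.Normal]
    (hcenter : ∀ a : H, (a : G1) ∈ K → φ a ∈ Subgroup.center G2) :
    PG.IsPartialNormal (embedLeft φ '' K) :=
  hA.isPartialNormal_image K fun a ha b hab => by
    obtain ⟨h, rfl⟩ := (embedLeft_eq_inl_iff φ).mp hab
    exact hcenter ⟨a, h⟩ ha

theorem not_isPartialNormal_range_embedLeft {b c : G2} (hb : b ∈ φ.range)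
    (hbc : c⁻¹ * b * c ∉ φ.range) : ¬ PG.IsPartialNormal (Set.range (embedLeft φ)) :=
  hA.not_isPartialNormal_range_i1 ((inl_mem_range_embedLeft_iff φ).mpr hb)
    (mt (inl_mem_range_embedLeft_iff φ).mp hbc)

end Realizes

end Amalgam

namespace DihedralAmalgam

open DihedralGroup Subgroup

abbrev C2C4 : Type := Multiplicative (ZMod 2) × Multiplicative (ZMod 4)

abbrev twoTorsion : Subgroup C2C4 := (powMonoidHom 2 : C2C4 →* C2C4).ker

def φ : twoTorsion →* DihedralGroup 8 :=
  MonoidHom.mk' (fun a => (if a.1.1 = 1 then r 0 else sr 0) * (if a.1.2 = 1 then r 0 else r 4))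
    (by decide)

theorem φ_injective : Function.Injective φ := by decide

noncomputable abbrev amalgam :
    Amalgam C2C4 (DihedralGroup 8) (DihedralGroup 8 ⊕ {a : C2C4 // a ∉ twoTorsion}) :=
  Amalgam.ofSubgroupHom φ φ_injective

theorem card_twoTorsion : Nat.card twoTorsion = 4 := by
  rw [Nat.card_eq_fintype_card]
  rfl

def m : C2C4 := (1, .ofAdd 1)

def n : C2C4 := (.ofAdd 1, .ofAdd 1)

theorem orderOf_m : orderOf m = 4 :=
  orderOf_eq_prime_pow (p := 2) (n := 1) (by decide) (by decide)

theorem orderOf_n : orderOf n = 4 :=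
  orderOf_eq_prime_pow (p := 2) (n := 1) (by decide) (by decide)

theorem zpowers_m_ne_zpowers_n : zpowers m ≠ zpowers n := fun h =>
  have hle : zpowers m ≤ (MonoidHom.fst _ _).ker := zpowers_le.mpr (by decide)
  absurd (hle (h ▸ mem_zpowers n)) (by decide)

open scoped Pointwise in
theorem zpowers_m_mul_zpowers_n :
    (zpowers m : Set C2C4) * (zpowers n : Set C2C4) = Set.univ := by
  refine Set.eq_univ_of_forall fun a => ?_
  obtain ⟨i, j, h⟩ : ∃ i j : Fin 4, m ^ (i : ℕ) * n ^ (j : ℕ) = a := by revert a; decide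
  exact ⟨_, npow_mem_zpowers m i, _, npow_mem_zpowers n j, h⟩

theorem φ_mem_center {g : C2C4} (hg : g = m ∨ g = n) (a : twoTorsion)
    (ha : (a : C2C4) ∈ zpowers g) : φ a ∈ center (DihedralGroup 8) := by
  have hord : orderOf g = 4 := by
    rcases hg with rfl | rfl
    exacts [orderOf_m, orderOf_n]
  obtain ⟨k, hk, hgk⟩ := Finset.mem_image.mp (mem_zpowers_iff_mem_range_orderOf.mp ha)
  have key : ∀ a : twoTorsion, ∀ k < 4, m ^ k = a ∨ n ^ k = a →
      φ a ∈ center (DihedralGroup 8) := by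
    decide
  refine key a k (by simpa [hord] using hk) ?_
  rcases hg with rfl | rfl
  exacts [.inl hgk, .inr hgk]

theorem isPartialNormal_zpowers {g : C2C4} (hg : g = m ∨ g = n) :
    amalgam.toPartialGroup.IsPartialNormal (amalgam.i1 '' zpowers g) :=
  amalgam.realizes_toPartialGroup.isPartialNormal_embedLeft_image _ (φ_mem_center hg)

theorem not_isPartialNormal_range_i1 :
    ¬ amalgam.toPartialGroup.IsPartialNormal (Set.range amalgam.i1) :=
  amalgam.realizes_toPartialGroup.not_isPartialNormal_range_embedLeft (b := sr 0) (c := r 1)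
    (by decide) (by decide)

end DihedralAmalgam

open DihedralAmalgam Subgroup

/-- there is a partial group `L` with partial normal subgroups `M`, `N`
whose product `MN` is not a partial normal subgroup. Concretely, `L = G1 ∪ G2` for an
amalgam of `G1 ≅ C2 × C4` and `G2` dihedral of order 16 with `G1 ∩ G2 ≅ C2 × C2`,
and `M`, `N` are the two cyclic subgroups of `G1` of order 4; then `MN = G1` is not
a partial normal subgroup of `L`. -/
theorem product_of_partial_normals_not_normal :
    ∃ (G1 G2 L : Type) (_ : Group G1) (_ : Group G2) (A : Amalgam G1 G2 L)
      (PG : PartialGroup L) (M N : Set L),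
      Nonempty (G1 ≃* Multiplicative (ZMod 2) × Multiplicative (ZMod 4)) ∧
      Nonempty (G2 ≃* DihedralGroup 8) ∧
      A.Realizes PG ∧
      Nat.card (Set.range A.i1 ∩ Set.range A.i2 : Set L) = 4 ∧
      (∃ M' N' : Subgroup G1, IsCyclic M' ∧ Nat.card M' = 4 ∧ IsCyclic N' ∧
        Nat.card N' = 4 ∧ M' ≠ N' ∧ M = A.i1 '' (M' : Set G1) ∧ N = A.i1 '' (N' : Set G1)) ∧
      PG.IsPartialNormal M ∧ PG.IsPartialNormal N ∧
      PG.setProd M N = Set.range A.i1 ∧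
      ¬ PG.IsPartialNormal (PG.setProd M N) := by
  have hA := amalgam.realizes_toPartialGroup
  have hMN : amalgam.toPartialGroup.setProd (amalgam.i1 '' zpowers m) (amalgam.i1 '' zpowers n) =
      Set.range amalgam.i1 := by
    rw [hA.setProd_image_i1, zpowers_m_mul_zpowers_n, Set.image_univ]
  refine ⟨_, _, _, _, _, amalgam, amalgam.toPartialGroup, _, _, ⟨.refl _⟩, ⟨.refl _⟩, hA,
    (Amalgam.card_ofSubgroupHom_range_inter φ_injective).trans card_twoTorsion,
    ⟨zpowers m, zpowers n, inferInstance, by rw [Nat.card_zpowers, orderOf_m], inferInstance,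
      by rw [Nat.card_zpowers, orderOf_n], zpowers_m_ne_zpowers_n, rfl, rfl⟩,
    isPartialNormal_zpowers (.inl rfl), isPartialNormal_zpowers (.inr rfl), hMN, ?_⟩
  rw [hMN]
  exact not_isPartialNormal_range_i1
end

section
/- Let G be a finite group, p a prime, S a Sylow p-subgroup of G, and X, Y normal subgroups of G. Then S ∩ (XY) = (S ∩ X)(S ∩ Y). -/
open scoped Pointwise

open Subgroup

/-
Write `A = S ∩ X`, `B = S ∩ Y` and `R = ⟨A, B⟩`, so that `R ≤ S ∩ XY`. For a normal subgroup `N`,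
`S ∩ N` has index prime to `p` in `N`, so every subgroup `H ⊇ S ∩ N` has index prime to `p` in
`HN`. Applied along the chain `R ≤ RX ≤ RXY = XY`, this makes `[XY : R]` prime to `p`; since
`S ∩ XY` is a `p`-group lying between `R` and `XY`, its index over `R` is both a power of `p` and
prime to `p`, hence `1`. Finally `A` normalises `B`, so `R` is the set product `AB`.
-/

theorem Subgroup.relIndex_sup_of_normal {G : Type*} [Group G] (H K : Subgroup G) [K.Normal]
    [K.FiniteIndex] : H.relIndex (H ⊔ K) = H.relIndex K := by
  have h0 : (H ⊓ K).relIndex H ≠ 0 := by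
    rw [inf_relIndex_left]
    exact isFiniteRelIndex_iff_relIndex_ne_zero.mp isFiniteRelIndex_of_finiteIndex
  apply Nat.eq_of_mul_eq_mul_left (Nat.pos_of_ne_zero h0)
  rw [relIndex_mul_relIndex _ _ _ inf_le_left le_sup_left,
    ← relIndex_mul_relIndex _ K _ inf_le_right le_sup_right, relIndex_sup_right,
    inf_relIndex_right, inf_relIndex_left, mul_comm]

theorem IsPGroup.le_of_not_dvd_relIndex {G : Type*} [Group G] {p : ℕ} [Fact p.Prime]
    {H K : Subgroup G} (hK : IsPGroup p K) (h : ¬ p ∣ H.relIndex K) : K ≤ H := by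
  have : (H.subgroupOf K).FiniteIndex := ⟨fun h0 => h (by rw [relIndex, h0]; exact dvd_zero p)⟩
  obtain ⟨n, hn⟩ := hK.index (H.subgroupOf K)
  rw [← relIndex_eq_one]
  rw [relIndex, hn] at h ⊢
  rcases n with _ | n
  · rfl
  · exact absurd (dvd_pow_self p n.succ_ne_zero) h

theorem Sylow.not_dvd_relIndex_sup {G : Type*} [Group G] {p : ℕ} [Fact p.Prime] (S : Sylow p G)
    [(S : Subgroup G).FiniteIndex] {H N : Subgroup G} [N.Normal] [N.FiniteIndex]
    (hH : (S : Subgroup G) ⊓ N ≤ H) : ¬ p ∣ H.relIndex (H ⊔ N) := by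
  have hSN : ((S : Subgroup G) ⊓ N).relIndex N ∣ (S : Subgroup G).index := by
    rw [inf_relIndex_right, ← relIndex_sup_of_normal]
    exact relIndex_dvd_index_of_le le_sup_left
  rw [relIndex_sup_of_normal]
  exact fun h => S.not_dvd_index (h.trans ((relIndex_dvd_of_le_left N hH).trans hSN))

theorem Sylow.inf_sup_inf_of_normal {G : Type*} [Group G] [Finite G] {p : ℕ} [Fact p.Prime]
    (S : Sylow p G) (X Y : Subgroup G) [X.Normal] [Y.Normal] :
    (S : Subgroup G) ⊓ X ⊔ (S : Subgroup G) ⊓ Y = (S : Subgroup G) ⊓ (X ⊔ Y) := by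
  set R := (S : Subgroup G) ⊓ X ⊔ (S : Subgroup G) ⊓ Y
  have hRT : R ≤ (S : Subgroup G) ⊓ (X ⊔ Y) :=
    sup_le (inf_le_inf_left _ le_sup_left) (inf_le_inf_left _ le_sup_right)
  have hTXY : (S : Subgroup G) ⊓ (X ⊔ Y) ≤ R ⊔ X ⊔ Y :=
    inf_le_right.trans (sup_le_sup_right le_sup_right Y)
  have hX : ¬ p ∣ R.relIndex (R ⊔ X) := S.not_dvd_relIndex_sup le_sup_left
  have hY : ¬ p ∣ (R ⊔ X).relIndex (R ⊔ X ⊔ Y) :=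
    S.not_dvd_relIndex_sup (le_sup_right.trans le_sup_left)
  have hXY : ¬ p ∣ R.relIndex (R ⊔ X ⊔ Y) := by
    rw [← relIndex_mul_relIndex R (R ⊔ X) _ le_sup_left le_sup_left,
      (Fact.out : p.Prime).dvd_mul]
    exact not_or.mpr ⟨hX, hY⟩
  refine le_antisymm hRT (IsPGroup.le_of_not_dvd_relIndex (S.isPGroup'.to_le inf_le_left) ?_)
  exact fun h => hXY (h.trans (Dvd.intro _ (relIndex_mul_relIndex _ _ _ hRT hTXY)))

/-- if `S` is a Sylow `p`-subgroup of a finite group `G` and `X`, `Y` are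
normal subgroups of `G`, then `S ∩ (XY) = (S ∩ X)(S ∩ Y)`. -/
theorem sylow_inter_mul {G : Type*} [Group G] [Finite G] {p : ℕ} [Fact p.Prime]
    (S : Sylow p G) (X Y : Subgroup G) (hX : X.Normal) (hY : Y.Normal) :
    ((S : Subgroup G) : Set G) ∩ ((X : Set G) * (Y : Set G)) =
      (((S : Subgroup G) : Set G) ∩ (X : Set G)) * (((S : Subgroup G) : Set G) ∩ (Y : Set G)) := by
  have hnorm : (S : Subgroup G) ⊓ X ≤ normalizer (((S : Subgroup G) ⊓ Y : Subgroup G) : Set G) :=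
    (inf_le_inf (S : Subgroup G).le_normalizer (le_normalizer_of_normal (H := Y))).trans
      inf_normalizer_le_normalizer_inf
  rw [← mul_normal X Y, ← coe_inf, ← coe_inf, ← coe_inf,
    ← coe_mul_of_left_le_normalizer_right _ _ hnorm, S.inf_sup_inf_of_normal X Y]
end

section
/- Let (L,Δ,S) be a locality and let K be a partial normal subgroup of L. Then T := S ∩ K is strongly closed in (L,Δ,S): for every g ∈ L and every t ∈ T ∩ S_g, one has t^g ∈ T. In particular T^g = T for any g ∈ L with T ⊆ S_g. -/
universe u v w

section Aux

variable {L : Type u} (PG : PartialGroup L)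

lemma aux_one_mul (x : L) : [PG.one, x] ∈ PG.D ∧ PG.prod [PG.one, x] = x := by
  have h := PG.prod_assoc [] [] [x] (by simpa using PG.single_mem x)
  simp only [List.singleton_append, List.cons_append, List.nil_append, List.append_nil] at h
  exact ⟨h.1, by simp only [PartialGroup.one]; rw [← h.2, PG.prod_single]⟩

lemma aux_mul_one (x : L) : [x, PG.one] ∈ PG.D ∧ PG.prod [x, PG.one] = x := by
  have h := PG.prod_assoc [x] [] [] (by simpa using PG.single_mem x)
  simp only [List.singleton_append, List.cons_append, List.nil_append, List.append_nil] at h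
  exact ⟨h.1, by simp only [PartialGroup.one]; rw [← h.2, PG.prod_single]⟩

lemma aux_inv_mul (f : L) : [PG.inv f, f] ∈ PG.D ∧ PG.prod [PG.inv f, f] = PG.one := by
  have h1 := PG.inv_word_mem [f] (PG.single_mem f)
  have h2 := PG.prod_inv_word [f] (PG.single_mem f)
  simp only [List.reverse_singleton, List.map_singleton, List.singleton_append] at h1 h2
  exact ⟨h1, h2⟩

lemma aux_mul_inv (f : L) : [f, PG.inv f] ∈ PG.D ∧ PG.prod [f, PG.inv f] = PG.one := by
  have h := aux_inv_mul PG (PG.inv f)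
  rwa [PG.inv_inv] at h

lemma aux_left_cancel {f x y : L} (hx : [f, x] ∈ PG.D) (hy : [f, y] ∈ PG.D)
    (h : PG.prod [f, x] = PG.prod [f, y]) : x = y := by
  have key : ∀ z : L, [f, z] ∈ PG.D → z = PG.prod [PG.inv f, PG.prod [f, z]] := by
    intro z hz
    have h4 : [PG.inv z, PG.inv f, f, z] ∈ PG.D := by
      have := PG.inv_word_mem [f, z] hz
      simpa using this
    have h3 : [PG.inv f, f, z] ∈ PG.D :=
      (PG.append_closed [PG.inv z] [PG.inv f, f, z] (by simpa using h4)).2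
    have a1 := PG.prod_assoc [] [PG.inv f, f] [z] (by simpa using h3)
    have a2 := PG.prod_assoc [PG.inv f] [f, z] [] (by simpa using h3)
    simp only [List.singleton_append, List.cons_append, List.nil_append, List.append_nil] at a1 a2
    rw [← a2.2, a1.2, (aux_inv_mul PG f).2, (aux_one_mul PG z).2]
  rw [key x hx, key y hy, h]

lemma aux_right_cancel {x y g : L} (hx : [x, g] ∈ PG.D) (hy : [y, g] ∈ PG.D)
    (h : PG.prod [x, g] = PG.prod [y, g]) : x = y := by
  have key : ∀ z : L, [z, g] ∈ PG.D → z = PG.prod [PG.prod [z, g], PG.inv g] := by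
    intro z hz
    have h4 : [PG.inv g, PG.inv z, z, g] ∈ PG.D := by
      have := PG.inv_word_mem [z, g] hz
      simpa using this
    have pre2 : [PG.inv g, PG.inv z] ∈ PG.D :=
      (PG.append_closed [PG.inv g, PG.inv z] [z, g] (by simpa using h4)).1
    have h4' : [z, g, PG.inv g, PG.inv z] ∈ PG.D := by
      have := PG.inv_word_mem [PG.inv g, PG.inv z] pre2
      simpa [PG.inv_inv] using this
    have h3 : [z, g, PG.inv g] ∈ PG.D :=
      (PG.append_closed [z, g, PG.inv g] [PG.inv z] (by simpa using h4')).1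
    have a1 := PG.prod_assoc [z] [g, PG.inv g] [] (by simpa using h3)
    have a2 := PG.prod_assoc [] [z, g] [PG.inv g] (by simpa using h3)
    simp only [List.singleton_append, List.cons_append, List.nil_append, List.append_nil] at a1 a2
    rw [← a2.2, a1.2, (aux_mul_inv PG g).2, (aux_mul_one PG z).2]
  rw [key x hx, key y hy, h]

lemma aux_conj_injOn {g : L} {x y : L} (hx : x ∈ PG.Dset g) (hy : y ∈ PG.Dset g)
    (h : PG.conj g x = PG.conj g y) : x = y := by
  have hx' : [PG.inv g, x, g] ∈ PG.D := hx
  have hy' : [PG.inv g, y, g] ∈ PG.D := hy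
  have hxg : [x, g] ∈ PG.D := (PG.append_closed [PG.inv g] [x, g] (by simpa using hx')).2
  have hyg : [y, g] ∈ PG.D := (PG.append_closed [PG.inv g] [y, g] (by simpa using hy')).2
  have a1 := PG.prod_assoc [PG.inv g] [x, g] [] (by simpa using hx')
  have a2 := PG.prod_assoc [PG.inv g] [y, g] [] (by simpa using hy')
  simp only [List.singleton_append, List.cons_append, List.nil_append, List.append_nil] at a1 a2
  have h2 : PG.prod [PG.inv g, PG.prod [x, g]] = PG.prod [PG.inv g, PG.prod [y, g]] := by
    rw [← a1.2, ← a2.2]; exact h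
  exact aux_right_cancel PG hxg hyg (aux_left_cancel PG a1.1 a2.1 h2)

end Aux

/-- for a partial normal subgroup `K` of a locality `(L,Δ,S)`,
`T = S ∩ K` is strongly closed: `t^g ∈ T` for all `g ∈ L`, `t ∈ T ∩ S_g`;
in particular `T^g = T` whenever `T ⊆ S_g`. -/
theorem inter_S_stronglyClosed {L : Type u} (Loc : Locality L) (K : Set L)
    (hK : Loc.toPartialGroup.IsPartialNormal K) :
    (∀ g : L, ∀ t ∈ (Loc.S ∩ K) ∩ Loc.Sg g, Loc.toPartialGroup.conj g t ∈ Loc.S ∩ K) ∧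
    (∀ g : L, Loc.S ∩ K ⊆ Loc.Sg g →
      Loc.toPartialGroup.conjSet g (Loc.S ∩ K) = Loc.S ∩ K) := by
  have part1 : ∀ g : L, ∀ t ∈ (Loc.S ∩ K) ∩ Loc.Sg g,
      Loc.toPartialGroup.conj g t ∈ Loc.S ∩ K := by
    rintro g t ⟨⟨htS, htK⟩, htSg⟩
    obtain ⟨-, htD, htSc⟩ := htSg
    exact ⟨htSc, hK.2 t htK g htD⟩
  refine ⟨part1, fun g hsub => ?_⟩
  have := Loc.finite
  have hsub' : Loc.toPartialGroup.conjSet g (Loc.S ∩ K) ⊆ Loc.S ∩ K := by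
    rintro _ ⟨t, ht, rfl⟩
    exact part1 g t ⟨ht, hsub ht⟩
  have hinj : Set.InjOn (Loc.toPartialGroup.conj g) (Loc.S ∩ K) := by
    intro x hx y hy hxy
    exact aux_conj_injOn Loc.toPartialGroup (hsub hx).2.1 (hsub hy).2.1 hxy
  have hcard : (Loc.toPartialGroup.conjSet g (Loc.S ∩ K)).ncard = (Loc.S ∩ K).ncard :=
    Set.ncard_image_of_injOn hinj
  exact Set.eq_of_subset_of_ncard_le hsub' (le_of_eq hcard.symm) (Set.toFinite _)
end

section
/- Let (L,Δ,S) be a locality and K a partial normal subgroup. The relation ↑_K on L∘Δ = {(f,P) ∈ L × Δ : P ≤ S_f}, defined by (f,P) ↑_K (g,Q) iff there exist x ∈ N_K(P,Q) and y ∈ N_K(P^f,Q^g) with xg = fy (both products defined in L), is reflexive and transitive. Moreover (f,P) ↑_K (f,S_f) via (1,1) for every (f,P) ∈ L∘Δ. -/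
universe u v w

/-! The pair `(x x', y y')` witnesses transitivity: from `x g = f y` and `x' h = g y'` one gets
`(x x') h = x (g y') = (f y) y' = f (y y')`. The work is in showing that all words involved are in
`D`. By (L2) this needs chains of members of `Δ`, which are obtained by conjugating `P`; so the key
fact is that `P^g ∈ Δ` whenever `P ∈ Δ` and `P ≤ S_g`. By (L3) this reduces to `P^g` being a
subgroup, i.e. to `c_g` being multiplicative on `S_g`, which follows by cancelling `g` in
`g (s^g t^g) = s g t^g = s t g = g (s t)^g`, using `s g = g s^g`. Reflexivity and
`(f, P) ↑_K (f, S_f)` are witnessed by `x = y = 1`. -/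

namespace PartialGroup

variable {L : Type*} (PG : PartialGroup L)

theorem prod_append {u v : List L} (h : u ++ v ∈ PG.D) :
    [PG.prod u, PG.prod v] ∈ PG.D ∧ PG.prod [PG.prod u, PG.prod v] = PG.prod (u ++ v) := by
  obtain ⟨h1, e1⟩ := PG.prod_assoc [] u v h
  obtain ⟨h2, e2⟩ := PG.prod_assoc [PG.prod u] v [] (by simpa using h1)
  simp only [List.nil_append, List.singleton_append, List.append_nil] at e1 h2 e2
  exact ⟨h2, by rw [← e2, ← e1]⟩

theorem prod_cons {a : L} {w : List L} (h : a :: w ∈ PG.D) :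
    [a, PG.prod w] ∈ PG.D ∧ PG.prod [a, PG.prod w] = PG.prod (a :: w) := by
  simpa [PG.prod_single] using PG.prod_append (u := [a]) h

theorem prod_concat {w : List L} {a : L} (h : w ++ [a] ∈ PG.D) :
    [PG.prod w, a] ∈ PG.D ∧ PG.prod [PG.prod w, a] = PG.prod (w ++ [a]) := by
  simpa [PG.prod_single] using PG.prod_append h

theorem prod_one_cons {w : List L} (h : w ∈ PG.D) :
    PG.one :: w ∈ PG.D ∧ PG.prod (PG.one :: w) = PG.prod w :=
  ⟨(PG.prod_assoc [] [] w h).1, (PG.prod_assoc [] [] w h).2.symm⟩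

theorem prod_one_left (f : L) : [PG.one, f] ∈ PG.D ∧ PG.prod [PG.one, f] = f := by
  simpa [PG.prod_single] using PG.prod_one_cons (PG.single_mem f)

theorem prod_one_right (f : L) : [f, PG.one] ∈ PG.D ∧ PG.prod [f, PG.one] = f := by
  obtain ⟨h, e⟩ := PG.prod_assoc [f] [] [] (PG.single_mem f)
  exact ⟨h, e.symm.trans (PG.prod_single f)⟩

theorem one_mul_eq_mul_one (f : L) :
    [PG.one, f] ∈ PG.D ∧ [f, PG.one] ∈ PG.D ∧ PG.prod [PG.one, f] = PG.prod [f, PG.one] :=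
  ⟨(PG.prod_one_left f).1, (PG.prod_one_right f).1,
    (PG.prod_one_left f).2.trans (PG.prod_one_right f).2.symm⟩

theorem prod_inv_left (f : L) : [PG.inv f, f] ∈ PG.D ∧ PG.prod [PG.inv f, f] = PG.one :=
  ⟨PG.inv_word_mem [f] (PG.single_mem f), PG.prod_inv_word [f] (PG.single_mem f)⟩

theorem prod_inv_right (f : L) : [f, PG.inv f] ∈ PG.D ∧ PG.prod [f, PG.inv f] = PG.one := by
  simpa [PG.inv_inv] using PG.prod_inv_left (PG.inv f)

theorem reverse_map_inv_reverse_map_inv (u : List L) :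
    (u.reverse.map PG.inv).reverse.map PG.inv = u := by
  simp [List.map_reverse, Function.comp_def, PG.inv_inv]

theorem inv_cons_mem {a : L} {w : List L} (h : a :: w ∈ PG.D) : PG.inv a :: a :: w ∈ PG.D :=
  (PG.append_closed (w.reverse.map PG.inv) _ (by simpa using PG.inv_word_mem _ h)).2

theorem concat_inv_mem {w : List L} {a : L} (h : w ++ [a] ∈ PG.D) :
    w ++ [a, PG.inv a] ∈ PG.D := by
  have h' := PG.inv_word_mem _ (PG.append_closed _ _ (PG.inv_word_mem _ h)).1
  rw [PG.reverse_map_inv_reverse_map_inv] at h'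
  exact (PG.append_closed _ (w.reverse.map PG.inv) (by simpa using h')).1

theorem prod_inv_cancel_left {g a : L} (h : [g, a] ∈ PG.D) :
    [PG.inv g, PG.prod [g, a]] ∈ PG.D ∧ PG.prod [PG.inv g, PG.prod [g, a]] = a := by
  have h' := PG.inv_cons_mem h
  obtain ⟨hm, e⟩ := PG.prod_cons h'
  have e' : PG.prod [PG.prod [PG.inv g, g], a] = PG.prod [PG.inv g, g, a] :=
    (PG.prod_concat (w := [PG.inv g, g]) h').2
  rw [(PG.prod_inv_left g).2, (PG.prod_one_left a).2] at e'
  exact ⟨hm, e.trans e'.symm⟩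

theorem cancel_left {g a b : L} (ha : [g, a] ∈ PG.D) (hb : [g, b] ∈ PG.D)
    (he : PG.prod [g, a] = PG.prod [g, b]) : a = b := by
  rw [← (PG.prod_inv_cancel_left ha).2, he, (PG.prod_inv_cancel_left hb).2]

theorem eq_inv_of_prod_eq_one {a b : L} (h : [b, a] ∈ PG.D) (he : PG.prod [b, a] = PG.one) :
    a = PG.inv b := by
  rw [← (PG.prod_inv_cancel_left h).2, he, (PG.prod_one_right _).2]

theorem prod_reverse_map_inv {u : List L} (hu : u ∈ PG.D) :
    u.reverse.map PG.inv ∈ PG.D ∧ PG.prod (u.reverse.map PG.inv) = PG.inv (PG.prod u) := by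
  have hv := (PG.append_closed _ _ (PG.inv_word_mem u hu)).1
  have huv := PG.inv_word_mem _ hv
  have e := PG.prod_inv_word _ hv
  rw [PG.reverse_map_inv_reverse_map_inv] at huv e
  obtain ⟨hm, e'⟩ := PG.prod_append huv
  exact ⟨hv, PG.eq_inv_of_prod_eq_one hm (e'.trans e)⟩

theorem conj_conj_inv {g s : L} (h : s ∈ PG.Dset g) :
    PG.conj g s ∈ PG.Dset (PG.inv g) ∧ PG.conj (PG.inv g) (PG.conj g s) = s := by
  have hcons : [g, PG.inv g, s, g] ∈ PG.D := by simpa [PG.inv_inv] using PG.inv_cons_mem h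
  have hword : [g, PG.inv g, s, g, PG.inv g] ∈ PG.D :=
    PG.concat_inv_mem (w := [g, PG.inv g, s]) hcons
  have hsuf : [s, g, PG.inv g] ∈ PG.D := (PG.append_closed [g, PG.inv g] _ hword).2
  have e1 : PG.prod [g, PG.inv g, s, g, PG.inv g] = PG.prod [g, PG.conj g s, PG.inv g] :=
    (PG.prod_assoc [g] [PG.inv g, s, g] [PG.inv g] hword).2
  have e2 : PG.prod [g, PG.inv g, s, g, PG.inv g] =
      PG.prod [PG.prod [g, PG.inv g], s, g, PG.inv g] :=
    (PG.prod_assoc [] [g, PG.inv g] [s, g, PG.inv g] hword).2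
  constructor
  · show [PG.inv (PG.inv g), PG.conj g s, PG.inv g] ∈ PG.D
    rw [PG.inv_inv]
    exact (PG.prod_assoc [g] [PG.inv g, s, g] [PG.inv g] hword).1
  · show PG.prod [PG.inv (PG.inv g), PG.conj g s, PG.inv g] = s
    rw [PG.inv_inv, ← e1, e2, (PG.prod_inv_right g).2, (PG.prod_one_cons hsuf).2,
      ← (PG.prod_cons hsuf).2, (PG.prod_inv_right g).2, (PG.prod_one_right s).2]

theorem conj_inv {g s : L} (h : s ∈ PG.Dset g) :
    PG.inv s ∈ PG.Dset g ∧ PG.conj g (PG.inv s) = PG.inv (PG.conj g s) := by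
  have := PG.prod_reverse_map_inv h
  simp only [List.reverse_cons, List.reverse_nil, List.nil_append, List.cons_append,
    List.map_cons, List.map_nil, PG.inv_inv] at this
  exact this

theorem conj_one (g : L) : PG.one ∈ PG.Dset g ∧ PG.conj g PG.one = PG.one := by
  obtain ⟨h, e⟩ := PG.prod_assoc [PG.inv g] [] [g] (PG.prod_inv_left g).1
  exact ⟨h, e.symm.trans (PG.prod_inv_left g).2⟩

theorem one_conj (s : L) : s ∈ PG.Dset PG.one ∧ PG.conj PG.one s = s := by
  obtain ⟨h, e⟩ := PG.prod_assoc [PG.one, s] [] [] (PG.prod_one_left s).1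
  have hinv : PG.inv PG.one = PG.one :=
    (PG.eq_inv_of_prod_eq_one (PG.prod_one_left PG.one).1 (PG.prod_one_left PG.one).2).symm
  rw [Dset, conj, hinv]
  exact ⟨h, e.symm.trans (PG.prod_one_left s).2⟩

theorem conjSet_one (A : Set L) : PG.conjSet PG.one A = A :=
  (Set.image_congr fun s _ => (PG.one_conj s).2).trans (Set.image_id' A)

theorem conjSet_subset_Dset_inv {g : L} {A : Set L} (hA : A ⊆ PG.Dset g) :
    PG.conjSet g A ⊆ PG.Dset (PG.inv g) := by
  rintro _ ⟨s, hs, rfl⟩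
  exact (PG.conj_conj_inv (hA hs)).1

theorem conjSet_inv_conjSet {g : L} {A : Set L} (hA : A ⊆ PG.Dset g) :
    PG.conjSet (PG.inv g) (PG.conjSet g A) = A := by
  rw [conjSet, conjSet, Set.image_image]
  exact (Set.image_congr fun s hs => (PG.conj_conj_inv (hA hs)).2).trans (Set.image_id' A)

theorem conj_prod_pair {a b s : L} (h : [PG.inv b, PG.inv a, s, a, b] ∈ PG.D) :
    s ∈ PG.Dset (PG.prod [a, b]) ∧ PG.conj (PG.prod [a, b]) s = PG.conj b (PG.conj a s) := by
  have hinv : PG.prod [PG.inv b, PG.inv a] = PG.inv (PG.prod [a, b]) := by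
    simpa using (PG.prod_reverse_map_inv (PG.append_closed [PG.inv b, PG.inv a, s] [a, b] h).2).2
  obtain ⟨h1, e1⟩ : [PG.prod [PG.inv b, PG.inv a], s, a, b] ∈ PG.D ∧
      PG.prod [PG.inv b, PG.inv a, s, a, b] = PG.prod [PG.prod [PG.inv b, PG.inv a], s, a, b] :=
    PG.prod_assoc [] [PG.inv b, PG.inv a] [s, a, b] h
  obtain ⟨h2, e2⟩ : [PG.prod [PG.inv b, PG.inv a], s, PG.prod [a, b]] ∈ PG.D ∧
      PG.prod [PG.prod [PG.inv b, PG.inv a], s, a, b] =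
        PG.prod [PG.prod [PG.inv b, PG.inv a], s, PG.prod [a, b]] :=
    PG.prod_assoc [PG.prod [PG.inv b, PG.inv a], s] [a, b] [] h1
  have e3 : PG.prod [PG.inv b, PG.inv a, s, a, b] = PG.conj b (PG.conj a s) :=
    (PG.prod_assoc [PG.inv b] [PG.inv a, s, a] [b] h).2
  rw [hinv] at e1 h2 e2
  exact ⟨h2, by rw [conj, ← e2, ← e1, e3]⟩

theorem conj_mul_conj {g s t : L} (h : [PG.inv g, s, g, PG.inv g, t, g] ∈ PG.D) :
    [PG.conj g s, PG.conj g t] ∈ PG.D ∧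
      PG.prod [PG.conj g s, PG.conj g t] = PG.conj g (PG.prod [s, t]) := by
  obtain ⟨h1, e1⟩ : [PG.conj g s, PG.inv g, t, g] ∈ PG.D ∧
      PG.prod [PG.inv g, s, g, PG.inv g, t, g] = PG.prod [PG.conj g s, PG.inv g, t, g] :=
    PG.prod_assoc [] [PG.inv g, s, g] [PG.inv g, t, g] h
  obtain ⟨h2, e2⟩ : [PG.conj g s, PG.conj g t] ∈ PG.D ∧
      PG.prod [PG.conj g s, PG.inv g, t, g] = PG.prod [PG.conj g s, PG.conj g t] :=
    PG.prod_assoc [PG.conj g s] [PG.inv g, t, g] [] h1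
  obtain ⟨h3, e3⟩ : [PG.inv g, s, PG.prod [g, PG.inv g], t, g] ∈ PG.D ∧
      PG.prod [PG.inv g, s, g, PG.inv g, t, g] =
        PG.prod [PG.inv g, s, PG.prod [g, PG.inv g], t, g] :=
    PG.prod_assoc [PG.inv g, s] [g, PG.inv g] [t, g] h
  rw [(PG.prod_inv_right g).2] at h3 e3
  obtain ⟨h4, e4⟩ : [PG.inv g, PG.prod [s, PG.one], t, g] ∈ PG.D ∧
      PG.prod [PG.inv g, s, PG.one, t, g] = PG.prod [PG.inv g, PG.prod [s, PG.one], t, g] :=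
    PG.prod_assoc [PG.inv g] [s, PG.one] [t, g] h3
  rw [(PG.prod_one_right s).2] at h4 e4
  have e5 : PG.prod [PG.inv g, s, t, g] = PG.conj g (PG.prod [s, t]) :=
    (PG.prod_assoc [PG.inv g] [s, t] [g] h4).2
  exact ⟨h2, by rw [← e2, ← e1, e3, e4, e5]⟩

theorem prod_swap {g s : L} (h : [g, PG.inv g, s, g] ∈ PG.D) (hsg : [s, g] ∈ PG.D) :
    [g, PG.conj g s] ∈ PG.D ∧ PG.prod [s, g] = PG.prod [g, PG.conj g s] := by
  obtain ⟨hm, e⟩ : [g, PG.conj g s] ∈ PG.D ∧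
      PG.prod [g, PG.inv g, s, g] = PG.prod [g, PG.conj g s] :=
    PG.prod_assoc [g] [PG.inv g, s, g] [] h
  refine ⟨hm, ?_⟩
  calc PG.prod [s, g] = PG.prod [PG.one, s, g] := (PG.prod_one_cons hsg).2.symm
    _ = PG.prod [PG.prod [g, PG.inv g], s, g] := by rw [(PG.prod_inv_right g).2]
    _ = PG.prod [g, PG.inv g, s, g] := (PG.prod_assoc [] [g, PG.inv g] [s, g] h).2.symm
    _ = PG.prod [g, PG.conj g s] := e

theorem prod_paste_squares {f g h x x' y y' : L} (hxx'h : [x, x', h] ∈ PG.D)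
    (hxgy' : [x, g, y'] ∈ PG.D) (hfyy' : [f, y, y'] ∈ PG.D)
    (e : PG.prod [x, g] = PG.prod [f, y]) (e' : PG.prod [x', h] = PG.prod [g, y']) :
    PG.prod [PG.prod [x, x'], h] = PG.prod [f, PG.prod [y, y']] :=
  calc PG.prod [PG.prod [x, x'], h]
      = PG.prod [x, x', h] := (PG.prod_concat (w := [x, x']) hxx'h).2
    _ = PG.prod [x, PG.prod [x', h]] := (PG.prod_cons hxx'h).2.symm
    _ = PG.prod [x, PG.prod [g, y']] := by rw [e']
    _ = PG.prod [x, g, y'] := (PG.prod_cons hxgy').2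
    _ = PG.prod [PG.prod [x, g], y'] := (PG.prod_concat (w := [x, g]) hxgy').2.symm
    _ = PG.prod [PG.prod [f, y], y'] := by rw [e]
    _ = PG.prod [f, y, y'] := (PG.prod_concat (w := [f, y]) hfyy').2
    _ = PG.prod [f, PG.prod [y, y']] := (PG.prod_cons hfyy').2.symm

variable {PG} {H : Set L}

theorem IsPartialSubgroup.one_mem (hH : PG.IsPartialSubgroup H) : PG.one ∈ H :=
  hH.2.2 [] PG.nil_mem (by simp)

theorem IsSubgroup.mem_D (hH : PG.IsSubgroup H) {w : List L} (hw : ∀ x ∈ w, x ∈ H) :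
    w ∈ PG.D :=
  hH.2 w hw

theorem IsSubgroup.prod_mem (hH : PG.IsSubgroup H) {w : List L} (hw : ∀ x ∈ w, x ∈ H) :
    PG.prod w ∈ H :=
  hH.1.2.2 w (hH.mem_D hw) hw

theorem IsSubgroup.inv_mem (hH : PG.IsSubgroup H) {a : L} (ha : a ∈ H) : PG.inv a ∈ H :=
  hH.1.2.1 a ha

theorem IsSubgroup.mem_Dset (hH : PG.IsSubgroup H) {a b : L} (ha : a ∈ H) (hb : b ∈ H) :
    b ∈ PG.Dset a :=
  hH.mem_D (by simp [hH.inv_mem ha, ha, hb])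

theorem IsSubgroup.conj_mem (hH : PG.IsSubgroup H) {a b : L} (ha : a ∈ H) (hb : b ∈ H) :
    PG.conj a b ∈ H :=
  hH.prod_mem (by simp [hH.inv_mem ha, ha, hb])

theorem IsSubgroup.conjSet_self (hH : PG.IsSubgroup H) {a : L} (ha : a ∈ H) :
    PG.conjSet a H = H := by
  refine subset_antisymm (by rintro _ ⟨b, hb, rfl⟩; exact hH.conj_mem ha hb) fun b hb => ?_
  have hb' := (PG.conj_conj_inv (hH.mem_Dset (hH.inv_mem ha) hb)).2
  rw [PG.inv_inv] at hb'
  exact ⟨_, hH.conj_mem (hH.inv_mem ha) hb, hb'⟩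

theorem IsPartialSubgroup.one_mem_NBetween {K A B : Set L} (hK : PG.IsPartialSubgroup K)
    (h : A ⊆ B) : PG.one ∈ PG.NBetween K A B :=
  ⟨hK.one_mem, fun s _ => (PG.one_conj s).1, by rwa [PG.conjSet_one]⟩

end PartialGroup

namespace Locality

variable {L : Type*} (Loc : Locality L)

theorem isSubgroup_S : Loc.IsSubgroup Loc.S := Loc.L1.1.1

theorem isSubgroup_of_mem_Δ {P : Set L} (hP : P ∈ Loc.Δ) : Loc.IsSubgroup P :=
  (Loc.Δ_subgroups P hP).2

theorem subset_S_of_mem_Δ {P : Set L} (hP : P ∈ Loc.Δ) : P ⊆ Loc.S :=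
  (Loc.Δ_subgroups P hP).1

/-- `w ∈ D` via `P` in the sense of (L2): `P, P^{w₁}, P^{w₁w₂}, …` are defined and lie in `Δ`. -/
def DefinedVia : Set L → List L → Prop
  | P, [] => P ∈ Loc.Δ
  | P, g :: w => P ∈ Loc.Δ ∧ P ⊆ Loc.Dset g ∧ DefinedVia (Loc.conjSet g P) w

theorem definedVia_of_chain : ∀ (w : List L) (Ps : Fin (w.length + 1) → Set L),
    (∀ i, Ps i ∈ Loc.Δ) →
    (∀ i : Fin w.length, Ps i.castSucc ⊆ Loc.Dset (w.get i) ∧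
      Loc.conjSet (w.get i) (Ps i.castSucc) = Ps i.succ) →
    Loc.DefinedVia (Ps ⟨0, w.length.succ_pos⟩) w
  | [], Ps, hΔ, _ => hΔ _
  | g :: w, Ps, hΔ, hstep => by
    refine ⟨hΔ _, (hstep ⟨0, by simp⟩).1, ?_⟩
    have e : Loc.conjSet g (Ps ⟨0, by simp⟩) = Ps ⟨1, by simp⟩ := (hstep ⟨0, by simp⟩).2
    rw [e]
    exact definedVia_of_chain w (fun i => Ps i.succ) (fun i => hΔ _) fun i => hstep i.succ

theorem exists_chain_of_definedVia : ∀ {P : Set L} {w : List L}, Loc.DefinedVia P w →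
    ∃ Ps : Fin (w.length + 1) → Set L, Ps 0 = P ∧ (∀ i, Ps i ∈ Loc.Δ) ∧
      ∀ i : Fin w.length, Ps i.castSucc ⊆ Loc.Dset (w.get i) ∧
        Loc.conjSet (w.get i) (Ps i.castSucc) = Ps i.succ
  | P, [], h => ⟨fun _ => P, rfl, fun _ => h, fun i => i.elim0⟩
  | P, g :: w, ⟨hP, hPg, h⟩ => by
    obtain ⟨Ps, h0, hΔ, hstep⟩ := exists_chain_of_definedVia h
    refine ⟨Fin.cons P Ps, rfl, Fin.cases hP hΔ, Fin.cases ?_ fun i => ?_⟩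
    · exact ⟨hPg, by simp [h0]⟩
    · simpa using hstep i

theorem mem_D_iff_exists_definedVia {w : List L} : w ∈ Loc.D ↔ ∃ P, Loc.DefinedVia P w := by
  rw [Loc.L2]
  constructor
  · rintro ⟨Ps, hΔ, hstep⟩
    exact ⟨_, Loc.definedVia_of_chain w Ps hΔ hstep⟩
  · rintro ⟨P, hP⟩
    obtain ⟨Ps, -, hΔ, hstep⟩ := Loc.exists_chain_of_definedVia hP
    exact ⟨Ps, hΔ, hstep⟩

theorem mem_D_of_definedVia {P : Set L} {w : List L} (h : Loc.DefinedVia P w) : w ∈ Loc.D :=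
  Loc.mem_D_iff_exists_definedVia.2 ⟨P, h⟩

theorem conjSet_mem_Δ {P : Set L} {g : L} (hP : P ∈ Loc.Δ) (hPg : P ⊆ Loc.Dset g)
    (hS : Loc.conjSet g P ⊆ Loc.S)
    (hmul : ∀ s ∈ P, ∀ t ∈ P,
      Loc.prod [Loc.conj g s, Loc.conj g t] = Loc.conj g (Loc.prod [s, t])) :
    Loc.conjSet g P ∈ Loc.Δ := by
  have hPsub := Loc.isSubgroup_of_mem_Δ hP
  have hprod : ∀ v ∈ Loc.D, (∀ x ∈ v, x ∈ Loc.conjSet g P) →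
      Loc.prod v ∈ Loc.conjSet g P := by
    intro v
    induction v with
    | nil => exact fun _ _ => ⟨Loc.one, hPsub.1.one_mem, (Loc.conj_one g).2⟩
    | cons a w ih =>
      intro hv hmem
      obtain ⟨t, ht, hta⟩ :=
        ih (Loc.append_closed [a] w hv).2 fun x hx => hmem x (List.mem_cons_of_mem a hx)
      obtain ⟨s, hs, hsa⟩ := hmem a List.mem_cons_self
      refine ⟨Loc.prod [s, t], hPsub.prod_mem (by simp [hs, ht]), ?_⟩
      rw [← hmul s hs t ht, hsa, hta, (Loc.prod_cons hv).2]
  refine Loc.L3 _ hS ⟨⟨⟨_, Loc.one, hPsub.1.one_mem, rfl⟩, ?_, hprod⟩,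
    fun w hw => Loc.isSubgroup_S.mem_D fun x hx => hS (hw x hx)⟩ ⟨P, hP, g, hPg, subset_rfl⟩
  rintro _ ⟨s, hs, rfl⟩
  exact ⟨_, hPsub.inv_mem hs, (Loc.conj_inv (hPg hs)).2⟩

theorem conj_mul_of_mem_S {u a b : L} (hu : u ∈ Loc.S) (ha : a ∈ Loc.S) (hb : b ∈ Loc.S) :
    Loc.prod [Loc.conj u a, Loc.conj u b] = Loc.conj u (Loc.prod [a, b]) :=
  (Loc.conj_mul_conj (Loc.isSubgroup_S.mem_D
    (by simp [Loc.isSubgroup_S.inv_mem hu, hu, ha, hb]))).2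

theorem conjSet_mem_Δ_of_mem_S {P : Set L} {u : L} (hP : P ∈ Loc.Δ) (hu : u ∈ Loc.S) :
    Loc.conjSet u P ∈ Loc.Δ := by
  have hPS := Loc.subset_S_of_mem_Δ hP
  refine Loc.conjSet_mem_Δ hP (fun s hs => Loc.isSubgroup_S.mem_Dset hu (hPS hs)) ?_
    fun s hs t ht => Loc.conj_mul_of_mem_S hu (hPS hs) (hPS ht)
  rintro _ ⟨s, hs, rfl⟩
  exact Loc.isSubgroup_S.conj_mem hu (hPS hs)

theorem conjSet_conjSet_of_mem_S {A : Set L} {s t : L} (hA : A ⊆ Loc.S) (hs : s ∈ Loc.S)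
    (ht : t ∈ Loc.S) : Loc.conjSet t (Loc.conjSet s A) = Loc.conjSet (Loc.prod [s, t]) A := by
  rw [PartialGroup.conjSet, PartialGroup.conjSet, PartialGroup.conjSet, Set.image_image]
  refine Set.image_congr fun y hy => (Loc.conj_prod_pair (Loc.isSubgroup_S.mem_D ?_)).2.symm
  simp [Loc.isSubgroup_S.inv_mem hs, Loc.isSubgroup_S.inv_mem ht, hs, ht, hA hy]

theorem definedVia_of_forall_mem_S {P : Set L} {w : List L} (hP : P ∈ Loc.Δ)
    (hw : ∀ x ∈ w, x ∈ Loc.S) : Loc.DefinedVia P w := by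
  induction w generalizing P with
  | nil => exact hP
  | cons a w ih =>
    have ha := hw a List.mem_cons_self
    exact ⟨hP, fun s hs => Loc.isSubgroup_S.mem_Dset ha (Loc.subset_S_of_mem_Δ hP hs),
      ih (Loc.conjSet_mem_Δ_of_mem_S hP ha) fun x hx => hw x (List.mem_cons_of_mem a hx)⟩

theorem definedVia_append_of_forall_mem_S {P : Set L} {u v : List L}
    (h : Loc.DefinedVia P u) (hv : ∀ x ∈ v, x ∈ Loc.S) : Loc.DefinedVia P (u ++ v) := by
  induction u generalizing P with
  | nil => exact Loc.definedVia_of_forall_mem_S h hv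
  | cons a u ih => exact ⟨h.1, h.2.1, ih h.2.2⟩

theorem definedVia_cons_cons_of_mem_S {P : Set L} {s t : L} {w : List L} (hP : P ∈ Loc.Δ)
    (hs : s ∈ Loc.S) (ht : t ∈ Loc.S)
    (h : Loc.DefinedVia (Loc.conjSet (Loc.prod [s, t]) P) w) :
    Loc.DefinedVia P (s :: t :: w) := by
  have hPS := Loc.subset_S_of_mem_Δ hP
  have hsP := Loc.conjSet_mem_Δ_of_mem_S hP hs
  refine ⟨hP, fun x hx => Loc.isSubgroup_S.mem_Dset hs (hPS hx), hsP,
    fun x hx => Loc.isSubgroup_S.mem_Dset ht (Loc.subset_S_of_mem_Δ hsP hx), ?_⟩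
  rwa [Loc.conjSet_conjSet_of_mem_S hPS hs ht]

theorem exists_definedVia_of_mem_Sg {g s : L} (hs : s ∈ Loc.Sg g) :
    ∃ X, Loc.DefinedVia X [g, Loc.inv g, s, g] := by
  obtain ⟨X, hX⟩ := Loc.mem_D_iff_exists_definedVia.1 hs.2.1
  have hback := Loc.conjSet_inv_conjSet hX.2.1
  have hD := Loc.conjSet_subset_Dset_inv hX.2.1
  rw [Loc.inv_inv] at hback hD
  exact ⟨_, hX.2.2.1, hD, by rwa [hback]⟩

theorem prod_swap_of_mem_Sg {g s : L} (hs : s ∈ Loc.Sg g) :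
    [g, Loc.conj g s] ∈ Loc.D ∧ Loc.prod [s, g] = Loc.prod [g, Loc.conj g s] := by
  obtain ⟨X, hX⟩ := Loc.exists_definedVia_of_mem_Sg hs
  exact Loc.prod_swap (Loc.mem_D_of_definedVia hX) (Loc.mem_D_of_definedVia hX.2.2.2.2)

theorem conj_mul_of_mem_Sg {g s t : L} (hs : s ∈ Loc.Sg g) (ht : t ∈ Loc.Sg g)
    (hst : Loc.prod [s, t] ∈ Loc.Sg g) :
    Loc.prod [Loc.conj g s, Loc.conj g t] = Loc.conj g (Loc.prod [s, t]) := by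
  obtain ⟨X, hX⟩ := Loc.exists_definedVia_of_mem_Sg hs
  obtain ⟨Z, hZ⟩ := Loc.exists_definedVia_of_mem_Sg hst
  have swap_s := Loc.prod_swap_of_mem_Sg hs
  have swap_t := Loc.prod_swap_of_mem_Sg ht
  have swap_st := Loc.prod_swap_of_mem_Sg hst
  have hstg : [s, t, g] ∈ Loc.D := Loc.mem_D_of_definedVia
    (Loc.definedVia_cons_cons_of_mem_S hZ.2.2.2.2.1 hs.1 ht.1 hZ.2.2.2.2.2.2)
  have hsgt : [s, g, Loc.conj g t] ∈ Loc.D := Loc.mem_D_of_definedVia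
    (Loc.definedVia_append_of_forall_mem_S (u := [s, g]) hX.2.2.2.2 (by simp [ht.2.2]))
  have hgst : [g, Loc.conj g s, Loc.conj g t] ∈ Loc.D := Loc.mem_D_of_definedVia
    (Loc.definedVia_append_of_forall_mem_S (u := [g]) ⟨hX.1, hX.2.1, hX.2.2.1⟩
      (by simp [hs.2.2, ht.2.2]))
  refine Loc.cancel_left (Loc.prod_cons hgst).1 swap_st.1 ?_
  calc Loc.prod [g, Loc.prod [Loc.conj g s, Loc.conj g t]]
      = Loc.prod [g, Loc.conj g s, Loc.conj g t] := (Loc.prod_cons hgst).2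
    _ = Loc.prod [Loc.prod [g, Loc.conj g s], Loc.conj g t] :=
      (Loc.prod_concat (w := [g, _]) hgst).2.symm
    _ = Loc.prod [Loc.prod [s, g], Loc.conj g t] := by rw [swap_s.2]
    _ = Loc.prod [s, g, Loc.conj g t] := (Loc.prod_concat (w := [s, g]) hsgt).2
    _ = Loc.prod [s, Loc.prod [g, Loc.conj g t]] := (Loc.prod_cons hsgt).2.symm
    _ = Loc.prod [s, Loc.prod [t, g]] := by rw [swap_t.2]
    _ = Loc.prod [s, t, g] := (Loc.prod_cons hstg).2
    _ = Loc.prod [Loc.prod [s, t], g] := (Loc.prod_concat (w := [s, t]) hstg).2.symm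
    _ = Loc.prod [g, Loc.conj g (Loc.prod [s, t])] := swap_st.2

theorem conjSet_mem_Δ_of_subset_Sg {P : Set L} {g : L} (hP : P ∈ Loc.Δ) (hPg : P ⊆ Loc.Sg g) :
    Loc.conjSet g P ∈ Loc.Δ := by
  refine Loc.conjSet_mem_Δ hP (fun s hs => (hPg hs).2.1) ?_ fun s hs t ht =>
    Loc.conj_mul_of_mem_Sg (hPg hs) (hPg ht)
      (hPg ((Loc.isSubgroup_of_mem_Δ hP).prod_mem (by simp [hs, ht])))
  rintro _ ⟨s, hs, rfl⟩
  exact (hPg hs).2.2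

def SgChain : Set L → List L → Prop
  | _, [] => True
  | P, a :: w => P ⊆ Loc.Sg a ∧ SgChain (Loc.conjSet a P) w

theorem mem_D_of_sgChain {P : Set L} {w : List L} (hP : P ∈ Loc.Δ) (h : Loc.SgChain P w) :
    w ∈ Loc.D := by
  suffices Loc.DefinedVia P w from Loc.mem_D_of_definedVia this
  induction w generalizing P with
  | nil => exact hP
  | cons a w ih =>
    exact ⟨hP, fun s hs => (h.1 hs).2.1, ih (Loc.conjSet_mem_Δ_of_subset_Sg hP h.1) h.2⟩

theorem conjSet_subset_S {A : Set L} {g : L} (h : A ⊆ Loc.Sg g) : Loc.conjSet g A ⊆ Loc.S := by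
  rintro _ ⟨s, hs, rfl⟩
  exact (h hs).2.2

theorem conjSet_subset_Sg_inv {A : Set L} {g : L} (h : A ⊆ Loc.Sg g) :
    Loc.conjSet g A ⊆ Loc.Sg (Loc.inv g) := by
  rintro _ ⟨s, hs, rfl⟩
  obtain ⟨hmem, hconj⟩ := Loc.conj_conj_inv (h hs).2.1
  exact ⟨(h hs).2.2, hmem, by rw [hconj]; exact (h hs).1⟩

theorem subset_Sg_of_mem_Δ {P : Set L} {s : L} (hP : P ∈ Loc.Δ) (hs : s ∈ P) :
    P ⊆ Loc.Sg s := fun _ hx =>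
  ⟨Loc.subset_S_of_mem_Δ hP hx, (Loc.isSubgroup_of_mem_Δ hP).mem_Dset hs hx,
    Loc.subset_S_of_mem_Δ hP ((Loc.isSubgroup_of_mem_Δ hP).conj_mem hs hx)⟩

theorem subset_Sg_of_mem_NBetween {K A B : Set L} {x : L} (hx : x ∈ Loc.NBetween K A B)
    (hA : A ⊆ Loc.S) (hB : B ⊆ Loc.S) : A ⊆ Loc.Sg x := fun s hs =>
  ⟨hA hs, hx.2.1 hs, hB (hx.2.2 ⟨s, hs, rfl⟩)⟩

theorem conj_prod_of_sgChain {P : Set L} {a b s : L} (hP : P ∈ Loc.Δ)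
    (h : Loc.SgChain P [a, b]) (hs : s ∈ P) :
    s ∈ Loc.Dset (Loc.prod [a, b]) ∧
      Loc.conj (Loc.prod [a, b]) s = Loc.conj b (Loc.conj a s) := by
  obtain ⟨ha, hb, -⟩ := h
  refine Loc.conj_prod_pair (Loc.mem_D_of_sgChain (Loc.conjSet_mem_Δ_of_subset_Sg
    (Loc.conjSet_mem_Δ_of_subset_Sg hP ha) hb) ⟨Loc.conjSet_subset_Sg_inv hb, ?_⟩)
  rw [Loc.conjSet_inv_conjSet fun x hx => (hb hx).2.1]
  refine ⟨Loc.conjSet_subset_Sg_inv ha, ?_⟩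
  rw [Loc.conjSet_inv_conjSet fun x hx => (ha hx).2.1]
  refine ⟨Loc.subset_Sg_of_mem_Δ hP hs, ?_⟩
  rw [(Loc.isSubgroup_of_mem_Δ hP).conjSet_self hs]
  exact ⟨ha, hb, trivial⟩

theorem mul_mem_NBetween {K P Q R : Set L} {x x' : L} (hK : Loc.IsPartialSubgroup K)
    (hP : P ∈ Loc.Δ) (hx : x ∈ Loc.NBetween K P Q) (hx' : x' ∈ Loc.NBetween K Q R)
    (hPx : P ⊆ Loc.Sg x) (hQx' : Q ⊆ Loc.Sg x') : Loc.prod [x, x'] ∈ Loc.NBetween K P R := by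
  have hchain : Loc.SgChain P [x, x'] := ⟨hPx, hx.2.2.trans hQx', trivial⟩
  refine ⟨hK.2.2 _ (Loc.mem_D_of_sgChain hP hchain) (by simp [hx.1, hx'.1]),
    fun s hs => (Loc.conj_prod_of_sgChain hP hchain hs).1, ?_⟩
  rintro _ ⟨s, hs, rfl⟩
  rw [(Loc.conj_prod_of_sgChain hP hchain hs).2]
  exact hx'.2.2 ⟨_, hx.2.2 ⟨s, hs, rfl⟩, rfl⟩

theorem upRel_of_subset {K P Q : Set L} (hK : Loc.IsPartialSubgroup K) (f : L) (h : P ⊆ Q) :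
    Loc.UpRel K (f, P) (f, Q) :=
  ⟨Loc.one, hK.one_mem_NBetween h, Loc.one, hK.one_mem_NBetween (Set.image_mono h),
    Loc.one_mul_eq_mul_one f⟩

theorem upRel_trans {K P Q R : Set L} {f g h : L} (hK : Loc.IsPartialSubgroup K)
    (hP : P ∈ Loc.Δ) (hPf : P ⊆ Loc.Sg f) (hQg : Q ⊆ Loc.Sg g) (hRh : R ⊆ Loc.Sg h)
    (h₁ : Loc.UpRel K (f, P) (g, Q)) (h₂ : Loc.UpRel K (g, Q) (h, R)) :
    Loc.UpRel K (f, P) (h, R) := by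
  obtain ⟨x, hx, y, hy, -, -, e⟩ := h₁
  obtain ⟨x', hx', y', hy', -, -, e'⟩ := h₂
  have hQS : Q ⊆ Loc.S := fun q hq => (hQg hq).1
  have hPx := Loc.subset_Sg_of_mem_NBetween hx (Loc.subset_S_of_mem_Δ hP) hQS
  have hQx' := Loc.subset_Sg_of_mem_NBetween hx' hQS fun r hr => (hRh hr).1
  have hPfy :=
    Loc.subset_Sg_of_mem_NBetween hy (Loc.conjSet_subset_S hPf) (Loc.conjSet_subset_S hQg)
  have hQgy' :=
    Loc.subset_Sg_of_mem_NBetween hy' (Loc.conjSet_subset_S hQg) (Loc.conjSet_subset_S hRh)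
  have hxx'h : [x, x', h] ∈ Loc.D := Loc.mem_D_of_sgChain hP
    ⟨hPx, hx.2.2.trans hQx', (Set.image_mono hx.2.2).trans (hx'.2.2.trans hRh), trivial⟩
  have hxgy' : [x, g, y'] ∈ Loc.D := Loc.mem_D_of_sgChain hP
    ⟨hPx, hx.2.2.trans hQg, (Set.image_mono hx.2.2).trans hQgy', trivial⟩
  have hfyy' : [f, y, y'] ∈ Loc.D := Loc.mem_D_of_sgChain hP
    ⟨hPf, hPfy, hy.2.2.trans hQgy', trivial⟩
  exact ⟨_, Loc.mul_mem_NBetween hK hP hx hx' hPx hQx', _,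
    Loc.mul_mem_NBetween hK (Loc.conjSet_mem_Δ_of_subset_Sg hP hPf) hy hy' hPfy hQgy',
    (Loc.prod_concat (w := [x, x']) hxx'h).1, (Loc.prod_cons hfyy').1,
    Loc.prod_paste_squares hxx'h hxgy' hfyy' e e'⟩

end Locality

/-- the relation `↑_K` on `L∘Δ` is reflexive and transitive, and
`(f,P) ↑_K (f,S_f)` via `(1,1)` for every `(f,P) ∈ L∘Δ`. -/
theorem upRel_refl_trans {L : Type u} (Loc : Locality L) (K : Set L)
    (hK : Loc.toPartialGroup.IsPartialNormal K) :
    (∀ fP ∈ Loc.LDelta, Loc.UpRel K fP fP) ∧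
    (∀ fP gQ hR : L × Set L, fP ∈ Loc.LDelta → gQ ∈ Loc.LDelta → hR ∈ Loc.LDelta →
      Loc.UpRel K fP gQ → Loc.UpRel K gQ hR → Loc.UpRel K fP hR) ∧
    (∀ fP ∈ Loc.LDelta,
      Loc.toPartialGroup.one ∈ Loc.toPartialGroup.NBetween K fP.2 (Loc.Sg fP.1) ∧
      Loc.toPartialGroup.one ∈ Loc.toPartialGroup.NBetween K
        (Loc.toPartialGroup.conjSet fP.1 fP.2)
        (Loc.toPartialGroup.conjSet fP.1 (Loc.Sg fP.1)) ∧
      [Loc.toPartialGroup.one, fP.1] ∈ Loc.toPartialGroup.D ∧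
      [fP.1, Loc.toPartialGroup.one] ∈ Loc.toPartialGroup.D ∧
      Loc.toPartialGroup.prod [Loc.toPartialGroup.one, fP.1] =
        Loc.toPartialGroup.prod [fP.1, Loc.toPartialGroup.one] ∧
      Loc.UpRel K fP (fP.1, Loc.Sg fP.1)) := by
  have hK' := hK.1
  refine ⟨fun fP _ => Loc.upRel_of_subset hK' fP.1 subset_rfl, ?_, fun fP hfP => ?_⟩
  · rintro ⟨f, P⟩ ⟨g, Q⟩ ⟨h, R⟩ hfP hgQ hhR
    exact Loc.upRel_trans hK' hfP.1 hfP.2 hgQ.2 hhR.2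
  · obtain ⟨hleft, hright, heq⟩ := Loc.one_mul_eq_mul_one fP.1
    exact ⟨hK'.one_mem_NBetween hfP.2, hK'.one_mem_NBetween (Set.image_mono hfP.2),
      hleft, hright, heq, Loc.upRel_of_subset hK' fP.1 hfP.2⟩
end

section
/- Let (L,Δ,S) be a locality, K a partial normal subgroup, T = S ∩ K, and let R be a subgroup of S with T ≤ R ≤ S. Then R = {s ∈ S : s̄ ∈ R̄} and N_{S̄}(R̄) = image of N_S(R) under the quotient map ρ : L → L/K. -/
universe u v w

namespace PartialGroup

variable {L : Type u} (PG : PartialGroup L)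

lemma mul_one_mem (x : L) : [x, PG.one] ∈ PG.D ∧ PG.prod [x, PG.one] = x := by
  have h := PG.prod_assoc [x] [] [] (by simpa using PG.single_mem x)
  simp only [List.append_nil, List.nil_append, List.singleton_append] at h
  refine ⟨h.1, ?_⟩
  show PG.prod [x, PG.prod []] = x
  rw [← h.2, PG.prod_single]

lemma one_cons (w : List L) (hw : w ∈ PG.D) :
    (PG.one :: w) ∈ PG.D ∧ PG.prod (PG.one :: w) = PG.prod w := by
  have h := PG.prod_assoc [] [] w (by simpa using hw)
  simp only [List.nil_append, List.singleton_append, List.append_nil] at h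
  exact ⟨h.1, h.2.symm⟩

lemma inv_mul_mem (x : L) : [PG.inv x, x] ∈ PG.D ∧ PG.prod [PG.inv x, x] = PG.one := by
  have h1 := PG.inv_word_mem [x] (PG.single_mem x)
  have h2 := PG.prod_inv_word [x] (PG.single_mem x)
  simp only [List.reverse_singleton, List.map_cons, List.map_nil,
    List.singleton_append] at h1 h2
  exact ⟨h1, h2⟩

lemma mul_inv_mem (x : L) : [x, PG.inv x] ∈ PG.D ∧ PG.prod [x, PG.inv x] = PG.one := by
  have h := PG.inv_mul_mem (PG.inv x)
  rwa [PG.inv_inv] at h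

lemma inv_uniq {x y : L} (h : [x, y] ∈ PG.D) (hp : PG.prod [x, y] = PG.one) :
    y = PG.inv x := by
  have h4 : [PG.inv y, PG.inv x, x, y] ∈ PG.D := by
    have := PG.inv_word_mem [x, y] h
    simpa using this
  have h3 : [PG.inv x, x, y] ∈ PG.D :=
    (PG.append_closed [PG.inv y] [PG.inv x, x, y] (by simpa using h4)).2
  have e1 := PG.prod_assoc [] [PG.inv x, x] [y] (by simpa using h3)
  have e2 := PG.prod_assoc [PG.inv x] [x, y] [] (by simpa using h3)
  simp only [List.nil_append, List.append_nil, List.singleton_append,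
    List.cons_append] at e1 e2
  have hy : PG.prod [PG.inv x, x, y] = y := by
    rw [e1.2, (PG.inv_mul_mem x).2]
    exact (PG.one_cons [y] (PG.single_mem y)).2.trans (PG.prod_single y)
  have hx : PG.prod [PG.inv x, x, y] = PG.inv x := by
    rw [e2.2, hp]
    exact (PG.mul_one_mem (PG.inv x)).2
  rw [← hy, hx]

lemma sub_word {H : Set L} (hH : PG.IsSubgroup H) {w : List L} (hw : ∀ x ∈ w, x ∈ H) :
    w ∈ PG.D ∧ PG.prod w ∈ H :=
  ⟨hH.2 w hw, hH.1.2.2 w (hH.2 w hw) hw⟩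

lemma conj_conj_inv_s8 {H : Set L} (hH : PG.IsSubgroup H) {a r : L} (ha : a ∈ H) (hr : r ∈ H) :
    PG.conj (PG.inv a) (PG.conj a r) = r := by
  have hia : PG.inv a ∈ H := hH.1.2.1 a ha
  have hmemW : ∀ x ∈ [a, PG.inv a, r, a, PG.inv a], x ∈ H := by
    intro x hx
    simp only [List.mem_cons, List.not_mem_nil, or_false] at hx
    rcases hx with rfl | rfl | rfl | rfl | rfl <;> assumption
  have hW := (PG.sub_word hH hmemW).1
  have hmem3 : ∀ x ∈ [r, a, PG.inv a], x ∈ H := by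
    intro x hx
    simp only [List.mem_cons, List.not_mem_nil, or_false] at hx
    rcases hx with rfl | rfl | rfl <;> assumption
  have h3 := (PG.sub_word hH hmem3).1
  have eA := PG.prod_assoc [a] [PG.inv a, r, a] [PG.inv a] (by simpa using hW)
  have eB := PG.prod_assoc [] [a, PG.inv a] [r, a, PG.inv a] (by simpa using hW)
  have eC := PG.prod_assoc [r] [a, PG.inv a] [] (by simpa using h3)
  simp only [List.nil_append, List.append_nil, List.singleton_append,
    List.cons_append] at eA eB eC
  show PG.prod [PG.inv (PG.inv a), PG.prod [PG.inv a, r, a], PG.inv a] = r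
  rw [PG.inv_inv, ← eA.2, eB.2, (PG.mul_inv_mem a).2,
    (PG.one_cons [r, a, PG.inv a] h3).2, eC.2, (PG.mul_inv_mem a).2, (PG.mul_one_mem r).2]

lemma conj_inv_conj {H : Set L} (hH : PG.IsSubgroup H) {a r : L} (ha : a ∈ H) (hr : r ∈ H) :
    PG.conj a (PG.conj (PG.inv a) r) = r := by
  have h := PG.conj_conj_inv_s8 hH (hH.1.2.1 a ha) hr
  rwa [PG.inv_inv] at h

end PartialGroup

section QuotientLemmas

variable {L : Type u} {L' : Type v} {Loc : Locality L} {Loc' : Locality L'} {K : Set L}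
  {ρ : L → L'}

lemma rho_one (hρ : IsQuotientMap Loc K Loc' ρ) :
    ρ Loc.toPartialGroup.one = Loc'.toPartialGroup.one :=
  (hρ.hom [] Loc.toPartialGroup.nil_mem).symm

lemma rho_mem_D (hρ : IsQuotientMap Loc K Loc' ρ) {w : List L}
    (hw : w ∈ Loc.toPartialGroup.D) : w.map ρ ∈ Loc'.toPartialGroup.D := by
  rw [hρ.D_eq]; exact ⟨w, hw, rfl⟩

lemma rho_inv (hρ : IsQuotientMap Loc K Loc' ρ) (x : L) :
    ρ (Loc.toPartialGroup.inv x) = Loc'.toPartialGroup.inv (ρ x) := by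
  have hm := (Loc.toPartialGroup.mul_inv_mem x).1
  have hD' : [ρ x, ρ (Loc.toPartialGroup.inv x)] ∈ Loc'.toPartialGroup.D := by
    simpa using rho_mem_D hρ hm
  apply Loc'.toPartialGroup.inv_uniq hD'
  have h := hρ.hom _ hm
  simp only [List.map_cons, List.map_nil] at h
  rw [h, (Loc.toPartialGroup.mul_inv_mem x).2, rho_one hρ]

lemma rho_conj (hρ : IsQuotientMap Loc K Loc' ρ) {a r : L}
    (h : [Loc.toPartialGroup.inv a, r, a] ∈ Loc.toPartialGroup.D) :
    ρ (Loc.toPartialGroup.conj a r) = Loc'.toPartialGroup.conj (ρ a) (ρ r) := by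
  show ρ (Loc.toPartialGroup.prod [Loc.toPartialGroup.inv a, r, a]) =
    Loc'.toPartialGroup.prod [Loc'.toPartialGroup.inv (ρ a), ρ r, ρ a]
  rw [← rho_inv hρ, ← hρ.hom _ h]
  simp only [List.map_cons, List.map_nil]

end QuotientLemmas

lemma part1_aux {L : Type u} {L' : Type v}
    (Loc : Locality L) (Loc' : Locality L') (K : Set L)
    (ρ : L → L') (hρ : IsQuotientMap Loc K Loc' ρ)
    (R : Set L) (hTR : Loc.S ∩ K ⊆ R) (hRS : R ⊆ Loc.S)
    (hR : Loc.toPartialGroup.IsSubgroup R) :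
    R = {s ∈ Loc.S | ∃ r ∈ R, ρ s = ρ r} := by
  have hS : Loc.toPartialGroup.IsSubgroup Loc.S := Loc.L1.1.1
  apply Set.eq_of_subset_of_subset
  · intro s hs
    exact ⟨hRS hs, s, hs, rfl⟩
  · rintro s ⟨hsS, r, hrR, hsr⟩
    have hirS : Loc.toPartialGroup.inv r ∈ Loc.S := hS.1.2.1 r (hRS hrR)
    have hmem2 : ∀ x ∈ [s, Loc.toPartialGroup.inv r], x ∈ Loc.S := by
      intro x hx
      simp only [List.mem_cons, List.not_mem_nil, or_false] at hx
      rcases hx with rfl | rfl <;> assumption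
    have hk := Loc.toPartialGroup.sub_word hS hmem2
    have hρk : ρ (Loc.toPartialGroup.prod [s, Loc.toPartialGroup.inv r]) =
        ρ Loc.toPartialGroup.one := by
      rw [← hρ.hom _ hk.1]
      have h2 := Loc.toPartialGroup.mul_inv_mem r
      rw [← h2.2, ← hρ.hom _ h2.1]
      simp only [List.map_cons, List.map_nil, hsr]
    have hkK : Loc.toPartialGroup.prod [s, Loc.toPartialGroup.inv r] ∈ K :=
      (hρ.ker _).mp hρk
    have hkR : Loc.toPartialGroup.prod [s, Loc.toPartialGroup.inv r] ∈ R :=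
      hTR ⟨hk.2, hkK⟩
    have hmem3 : ∀ x ∈ [s, Loc.toPartialGroup.inv r, r], x ∈ Loc.S := by
      intro x hx
      simp only [List.mem_cons, List.not_mem_nil, or_false] at hx
      rcases hx with rfl | rfl | rfl <;> [assumption; assumption; exact hRS hrR]
    have h3 := (Loc.toPartialGroup.sub_word hS hmem3).1
    have e1 := Loc.toPartialGroup.prod_assoc [] [s, Loc.toPartialGroup.inv r] [r]
      (by simpa using h3)
    have e2 := Loc.toPartialGroup.prod_assoc [s] [Loc.toPartialGroup.inv r, r] []
      (by simpa using h3)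
    simp only [List.nil_append, List.append_nil, List.singleton_append,
      List.cons_append] at e1 e2
    have hs_eq : Loc.toPartialGroup.prod
        [Loc.toPartialGroup.prod [s, Loc.toPartialGroup.inv r], r] = s := by
      rw [← e1.2, e2.2, (Loc.toPartialGroup.inv_mul_mem r).2,
        (Loc.toPartialGroup.mul_one_mem s).2]
    have hmemkr : ∀ x ∈ [Loc.toPartialGroup.prod [s, Loc.toPartialGroup.inv r], r], x ∈ R := by
      intro x hx
      simp only [List.mem_cons, List.not_mem_nil, or_false] at hx
      rcases hx with rfl | rfl <;> assumption
    have := (Loc.toPartialGroup.sub_word hR hmemkr).2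
    rwa [hs_eq] at this

/-- for `T = S ∩ K ≤ R ≤ S` with `R` a subgroup, `R` equals the set of
`s ∈ S` with `s̄ ∈ R̄`, and `N_{S̄}(R̄) = (N_S(R))‾` in the quotient locality `L/K`. -/
theorem preimage_and_normalizer_bar {L : Type u} {L' : Type v}
    (Loc : Locality L) (Loc' : Locality L') (K : Set L)
    (hK : Loc.toPartialGroup.IsPartialNormal K)
    (ρ : L → L') (hρ : IsQuotientMap Loc K Loc' ρ)
    (R : Set L) (hTR : Loc.S ∩ K ⊆ R) (hRS : R ⊆ Loc.S)
    (hR : Loc.toPartialGroup.IsSubgroup R) :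
    R = {s ∈ Loc.S | ∃ r ∈ R, ρ s = ρ r} ∧
    Loc'.toPartialGroup.NIn Loc'.S (ρ '' R) =
      ρ '' Loc.toPartialGroup.NIn Loc.S R := by
  have hS : Loc.toPartialGroup.IsSubgroup Loc.S := Loc.L1.1.1
  have hS' : Loc'.toPartialGroup.IsSubgroup Loc'.S := Loc'.L1.1.1
  have hp1 := part1_aux Loc Loc' K ρ hρ R hTR hRS hR
  -- conjugation of S-elements by S-elements is always defined and stays in S
  have hconjD : ∀ b ∈ Loc.S, ∀ r ∈ Loc.S,
      [Loc.toPartialGroup.inv b, r, b] ∈ Loc.toPartialGroup.D ∧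
        Loc.toPartialGroup.conj b r ∈ Loc.S := by
    intro b hb r hr
    have hib := hS.1.2.1 b hb
    have hmem : ∀ x ∈ [Loc.toPartialGroup.inv b, r, b], x ∈ Loc.S := by
      intro x hx
      simp only [List.mem_cons, List.not_mem_nil, or_false] at hx
      rcases hx with rfl | rfl | rfl <;> assumption
    exact Loc.toPartialGroup.sub_word hS hmem
  refine ⟨hp1, ?_⟩
  apply Set.eq_of_subset_of_subset
  · rintro x ⟨hxS', hxD, hxC⟩
    rw [hρ.S_eq] at hxS'
    obtain ⟨a, haS, rfl⟩ := hxS'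
    have hconjR : ∀ r ∈ R, Loc.toPartialGroup.conj a r ∈ R := by
      intro r hr
      have hc := hconjD a haS r (hRS hr)
      have hmem : Loc'.toPartialGroup.conj (ρ a) (ρ r) ∈
          Loc'.toPartialGroup.conjSet (ρ a) (ρ '' R) := ⟨ρ r, ⟨r, hr, rfl⟩, rfl⟩
      rw [hxC] at hmem
      obtain ⟨r', hr', hrr'⟩ := hmem
      rw [hp1]
      exact ⟨hc.2, r', hr', by rw [rho_conj hρ hc.1, ← hrr']⟩
    refine ⟨a, ⟨haS, ?_, ?_⟩, rfl⟩
    · intro r hr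
      exact (hconjD a haS r (hRS hr)).1
    · apply Set.eq_of_subset_of_subset
      · rintro _ ⟨r, hr, rfl⟩
        exact hconjR r hr
      · intro r hr
        have hia : Loc.toPartialGroup.inv a ∈ Loc.S := hS.1.2.1 a haS
        have hc0 := hconjD (Loc.toPartialGroup.inv a) hia r (hRS hr)
        -- ρ r ∈ ρ '' R = conjSet (ρ a) (ρ '' R)
        have hmem : ρ r ∈ Loc'.toPartialGroup.conjSet (ρ a) (ρ '' R) := by
          rw [hxC]; exact ⟨r, hr, rfl⟩
        obtain ⟨_, ⟨r₁, hr₁, rfl⟩, hc⟩ := hmem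
        have haS' : ρ a ∈ Loc'.S := by rw [hρ.S_eq]; exact ⟨a, haS, rfl⟩
        have hr₁S' : ρ r₁ ∈ Loc'.S := by rw [hρ.S_eq]; exact ⟨r₁, hRS hr₁, rfl⟩
        have hρr0 : ρ (Loc.toPartialGroup.conj (Loc.toPartialGroup.inv a) r) = ρ r₁ := by
          rw [rho_conj hρ hc0.1, rho_inv hρ, ← hc]
          exact Loc'.toPartialGroup.conj_conj_inv_s8 hS' haS' hr₁S'
        have hr0R : Loc.toPartialGroup.conj (Loc.toPartialGroup.inv a) r ∈ R := by
          rw [hp1]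
          exact ⟨hc0.2, r₁, hr₁, hρr0⟩
        exact ⟨_, hr0R, Loc.toPartialGroup.conj_inv_conj hS haS (hRS hr)⟩
  · rintro _ ⟨a, ⟨haS, haD, haC⟩, rfl⟩
    refine ⟨by rw [hρ.S_eq]; exact ⟨a, haS, rfl⟩, ?_, ?_⟩
    · rintro _ ⟨r, hr, rfl⟩
      have h1 := rho_mem_D hρ (hconjD a haS r (hRS hr)).1
      simp only [List.map_cons, List.map_nil, rho_inv hρ] at h1
      exact h1
    · apply Set.eq_of_subset_of_subset
      · rintro _ ⟨_, ⟨r, hr, rfl⟩, rfl⟩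
        rw [← rho_conj hρ (hconjD a haS r (hRS hr)).1]
        have hcr : Loc.toPartialGroup.conj a r ∈ R := by
          rw [← haC]; exact ⟨r, hr, rfl⟩
        exact ⟨_, hcr, rfl⟩
      · rintro _ ⟨r, hr, rfl⟩
        have hr' : r ∈ Loc.toPartialGroup.conjSet a R := by rw [haC]; exact hr
        obtain ⟨r₁, hr₁, hc⟩ := hr'
        exact ⟨ρ r₁, ⟨r₁, hr₁, rfl⟩,
          by rw [← rho_conj hρ (hconjD a haS r₁ (hRS hr₁)).1, hc]⟩
end

section
/- Let (L,Δ,S) be a locality, K a partial normal subgroup, and X a subset of L. If H is a partial subgroup of L containing K, then X̄ ∩ H̄ = (X ∩ H)‾, where bars denote images under the quotient map ρ : L → L/K. -/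
universe u v w

/-- If `(k,f) ∈ D` and `k ∈ K ⊆ H` with `H` a partial subgroup containing
`prod [k,f]`, then `f ∈ H`. -/
lemma PartialGroup.mem_of_coset_mem {L : Type u} (PG : PartialGroup L)
    {H K : Set L} (hH : PG.IsPartialSubgroup H) (hKH : K ⊆ H)
    {k f : L} (hk : k ∈ K) (hD : [k, f] ∈ PG.D) (hkf : PG.prod [k, f] ∈ H) :
    f ∈ H := by
  -- first show f = prod [inv k, prod [k,f]] and membership in D
  have h1 := PG.inv_word_mem [k, f] hD
  simp only [List.reverse_cons, List.reverse_nil, List.map] at h1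
  -- h1 : [inv f, inv k, k, f] ∈ D  (up to list normalization)
  have h2 : [PG.inv k, k, f] ∈ PG.D := by
    have := PG.append_closed [PG.inv f] [PG.inv k, k, f] (by simpa using h1)
    exact this.2
  have h3 := PG.prod_assoc [PG.inv k] [k, f] [] (by simpa using h2)
  have h4 := PG.prod_assoc [] [PG.inv k, k] [f] (by simpa using h2)
  have h5 : PG.prod [PG.inv k, k] = PG.prod [] := by
    have := PG.prod_inv_word [k] (PG.single_mem k)
    simpa using this
  have h6 := PG.prod_assoc [] [] [f] (by simpa using PG.single_mem f)
  -- prod [one, f] = f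
  have h7 : PG.prod [PG.prod [], f] = f := by
    have := h6.2
    simp only [List.nil_append] at this
    rw [PG.prod_single] at this
    simpa using this.symm
  have hfeq : f = PG.prod [PG.inv k, PG.prod [k, f]] := by
    have e1 : PG.prod [PG.inv k, k, f] = PG.prod [PG.inv k, PG.prod [k, f]] := by
      simpa using h3.2
    have e2 : PG.prod [PG.inv k, k, f] = PG.prod [PG.prod [PG.inv k, k], f] := by
      simpa using h4.2
    rw [e2, h5, h7] at e1
    exact e1
  have hDmem : [PG.inv k, PG.prod [k, f]] ∈ PG.D := by simpa using h3.1
  rw [hfeq]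
  refine hH.2.2 _ hDmem ?_
  intro x hx
  simp only [List.mem_cons, List.not_mem_nil, or_false] at hx
  rcases hx with rfl | rfl
  · exact hH.2.1 k (hKH hk)
  · exact hkf

/-- for any subset `X` of `L` and any partial subgroup `H` containing
`K`, one has `X̄ ∩ H̄ = (X ∩ H)‾` in the quotient `L/K`. -/
theorem image_inter_partialSubgroup {L : Type u} {L' : Type v}
    (Loc : Locality L) (Loc' : Locality L') (K : Set L)
    (hK : Loc.toPartialGroup.IsPartialNormal K)
    (ρ : L → L') (hρ : IsQuotientMap Loc K Loc' ρ)
    (X H : Set L) (hH : Loc.toPartialGroup.IsPartialSubgroup H) (hKH : K ⊆ H) :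
    (ρ '' X) ∩ (ρ '' H) = ρ '' (X ∩ H) := by
  apply Set.Subset.antisymm
  · rintro z ⟨⟨x, hxX, rfl⟩, ⟨h, hhH, hhx⟩⟩
    -- ρ x = ρ h, so x and h lie in a common maximal coset of K
    have hsame := (hρ.fiber h x).mp hhx
    obtain ⟨C, ⟨⟨g, rfl⟩, -⟩, hhC, hxC⟩ := hsame
    obtain ⟨k2, hk2, hD2, hh⟩ := hhC
    obtain ⟨k1, hk1, hD1, hx⟩ := hxC
    -- g ∈ H since h = k2 g ∈ H
    have hgH : g ∈ H :=
      Loc.toPartialGroup.mem_of_coset_mem hH hKH hk2 hD2 (hh ▸ hhH)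
    -- x = k1 g ∈ H
    have hxH : x ∈ H := by
      rw [hx]
      refine hH.2.2 _ hD1 ?_
      intro y hy
      simp only [List.mem_cons, List.not_mem_nil, or_false] at hy
      rcases hy with rfl | rfl
      · exact hKH hk1
      · exact hgH
    exact ⟨x, ⟨hxX, hxH⟩, rfl⟩
  · rintro z ⟨x, ⟨hxX, hxH⟩, rfl⟩
    exact ⟨⟨x, hxX, rfl⟩, ⟨x, hxH, rfl⟩⟩
end
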